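/- arXiv:2506.03936 — 4 statements merged into one kernel-verified Lean document; each statement's English description precedes it below -/
import Mathlib

section
/- (Torsion-free Carrollian case: reduced non-metricities, reduced identities, and distorsion decomposition.) Assume the duality relations hold on U and the connection is symmetric: T^α_{μν} = 0 at every point. Define the Carrollian reduced non-metricities 𝒬̌_μ{}^ν := ∇_μ v^ν − Θ_{μσ} h^{σν} and 𝒬̌_{αμν} := ∇_α γ_{μν} + τ_μ Θ_{να} + τ_ν Θ_{μα}. Then at every point of U: (i) v^ν 𝒬̌_{αμν} = − γ_{μν} 𝒬̌_α{}^ν; (ii) v^α 𝒬̌_{αμν} = −(γ_{νσ} 𝒬̌_μ{}^σ + γ_{μσ} 𝒬̌_ν{}^σ); and (iii) Γ^α_{μν} − ^{v,τ}Γ^α_{μν} = −(1/2) h^{ασ} (𝒬̌_{μνσ} + 𝒬̌_{νμσ}) + (1/2) h^{ασ} 𝒬̌_{σμν} − (1/2) v^α (∇_μ τ_ν + ∇_ν τ_μ). -/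
/-! Common setup: fields on an open subset `U` of `ℝ⁴`, coordinates indexed by `Fin 4`,
partial derivatives `pd`, covariant derivatives, torsion, the intrinsic objects
`ω`, `Θ`, the compatible connection `^{v,τ}Γ` and the Coriolis field. -/

abbrev Vec4 : Type := Fin 4 → ℝ
abbrev Tens1 : Type := Vec4 → Fin 4 → ℝ
abbrev Tens2 : Type := Vec4 → Fin 4 → Fin 4 → ℝ
abbrev Tens3 : Type := Vec4 → Fin 4 → Fin 4 → Fin 4 → ℝ

/-- μ-th partial derivative -/
noncomputable def pd (μ : Fin 4) (f : Vec4 → ℝ) (x : Vec4) : ℝ :=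
  fderiv ℝ f x (Pi.single μ 1)

/-- ∇_μ τ_ν := ∂_μ τ_ν − Γ^σ_{μν} τ_σ -/
noncomputable def covOne (Γ : Tens3) (τ : Tens1) (x : Vec4) (μ ν : Fin 4) : ℝ :=
  pd μ (fun y => τ y ν) x - ∑ σ, Γ x σ μ ν * τ x σ

/-- ∇_μ v^ν := ∂_μ v^ν + Γ^ν_{μσ} v^σ -/
noncomputable def covVec (Γ : Tens3) (v : Tens1) (x : Vec4) (μ ν : Fin 4) : ℝ :=
  pd μ (fun y => v y ν) x + ∑ σ, Γ x ν μ σ * v x σ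

/-- ∇_α γ_{μν} := ∂_α γ_{μν} − Γ^σ_{αμ} γ_{σν} − Γ^σ_{αν} γ_{μσ} -/
noncomputable def covLow (Γ : Tens3) (γ : Tens2) (x : Vec4) (α μ ν : Fin 4) : ℝ :=
  pd α (fun y => γ y μ ν) x - ∑ σ, Γ x σ α μ * γ x σ ν - ∑ σ, Γ x σ α ν * γ x μ σ

/-- ∇_α h^{μν} := ∂_α h^{μν} + Γ^μ_{ασ} h^{σν} + Γ^ν_{ασ} h^{μσ} -/
noncomputable def covUp (Γ : Tens3) (h : Tens2) (x : Vec4) (α μ ν : Fin 4) : ℝ :=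
  pd α (fun y => h y μ ν) x + ∑ σ, Γ x μ α σ * h x σ ν + ∑ σ, Γ x ν α σ * h x μ σ

/-- Torsion T^α_{μν} := Γ^α_{μν} − Γ^α_{νμ} -/
def torsion (Γ : Tens3) (x : Vec4) (α μ ν : Fin 4) : ℝ :=
  Γ x α μ ν - Γ x α ν μ

/-- ω_{μν} := (1/2)(∂_μ τ_ν − ∂_ν τ_μ) -/
noncomputable def omega2 (τ : Tens1) (x : Vec4) (μ ν : Fin 4) : ℝ :=
  (1/2) * (pd μ (fun y => τ y ν) x - pd ν (fun y => τ y μ) x)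

/-- Θ_{μν} := (1/2)(v^σ ∂_σ γ_{μν} + γ_{σν} ∂_μ v^σ + γ_{μσ} ∂_ν v^σ) -/
noncomputable def theta2 (v : Tens1) (γ : Tens2) (x : Vec4) (μ ν : Fin 4) : ℝ :=
  (1/2) * (∑ σ, v x σ * pd σ (fun y => γ y μ ν) x
    + ∑ σ, γ x σ ν * pd μ (fun y => v y σ) x
    + ∑ σ, γ x μ σ * pd ν (fun y => v y σ) x)

/-- The compatible connection ^{v,τ}Γ^α_{μν} -/
noncomputable def compatConn (v τ : Tens1) (γ h : Tens2) : Tens3 := fun x α μ ν =>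
  ∑ σ, h x α σ * ((1/2) * pd μ (fun y => γ y ν σ) x + (1/2) * pd ν (fun y => γ y μ σ) x
    - (1/2) * pd σ (fun y => γ y μ ν) x)
  + (1/2) * v x α * (pd μ (fun y => τ y ν) x + pd ν (fun y => τ y μ) x)

/-- Coriolis field κ_{μν} := (1/2)(γ_{να} ∇_μ v^α − γ_{μα} ∇_ν v^α) -/
noncomputable def coriolis (Γ : Tens3) (v : Tens1) (γ : Tens2) (x : Vec4) (μ ν : Fin 4) : ℝ :=
  (1/2) * (∑ α, γ x ν α * covVec Γ v x μ α - ∑ α, γ x μ α * covVec Γ v x ν α)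

/-- Smoothness of a rank-1 field on U -/
def Smooth1 (τ : Tens1) (U : Set Vec4) : Prop := ∀ ν, ContDiffOn ℝ (⊤ : ℕ∞) (fun x => τ x ν) U
/-- Smoothness of a rank-2 field on U -/
def Smooth2 (γ : Tens2) (U : Set Vec4) : Prop := ∀ μ ν, ContDiffOn ℝ (⊤ : ℕ∞) (fun x => γ x μ ν) U
/-- Smoothness of connection coefficients on U -/
def Smooth3 (Γ : Tens3) (U : Set Vec4) : Prop := ∀ α μ ν, ContDiffOn ℝ (⊤ : ℕ∞) (fun x => Γ x α μ ν) U

/-- Kronecker delta -/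
def kron (μ ν : Fin 4) : ℝ := if μ = ν then 1 else 0

/-- The duality relations: τ_μ v^μ = 1, h^{μν} τ_ν = 0, γ_{μν} v^ν = 0,
h^{μσ} γ_{σν} = δ^μ_ν − v^μ τ_ν, together with symmetry of γ and h. -/
def DualityOn (τ v : Tens1) (γ h : Tens2) (U : Set Vec4) : Prop :=
  ∀ x ∈ U, (∀ μ ν, γ x μ ν = γ x ν μ) ∧ (∀ μ ν, h x μ ν = h x ν μ) ∧
    (∑ μ, τ x μ * v x μ = 1) ∧
    (∀ μ, ∑ ν, h x μ ν * τ x ν = 0) ∧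
    (∀ μ, ∑ ν, γ x μ ν * v x ν = 0) ∧
    (∀ μ ν, ∑ σ, h x μ σ * γ x σ ν = kron μ ν - v x μ * τ x ν)

/-- Carrollian reduced non-metricity 𝒬̌_μ{}^ν := ∇_μ v^ν − Θ_{μσ} h^{σν} -/
noncomputable def carRedQUp (Γ : Tens3) (v : Tens1) (γ h : Tens2)
    (x : Vec4) (μ ν : Fin 4) : ℝ :=
  covVec Γ v x μ ν - ∑ σ, theta2 v γ x μ σ * h x σ ν

/-- Carrollian reduced non-metricity 𝒬̌_{αμν} := ∇_α γ_{μν} + τ_μ Θ_{να} + τ_ν Θ_{μα} -/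
noncomputable def carRedQLow (Γ : Tens3) (τ v : Tens1) (γ : Tens2)
    (x : Vec4) (α μ ν : Fin 4) : ℝ :=
  covLow Γ γ x α μ ν + τ x μ * theta2 v γ x ν α + τ x ν * theta2 v γ x μ α


lemma pd_congr_of_eqOn {U : Set Vec4} (hU : IsOpen U) {x : Vec4} (hx : x ∈ U)
    {f g : Vec4 → ℝ} (hfg : ∀ y ∈ U, f y = g y) (α : Fin 4) : pd α f x = pd α g x := by
  unfold pd
  rw [Filter.EventuallyEq.fderiv_eq (by filter_upwards [hU.mem_nhds hx] with y hy using hfg y hy)]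

lemma diffAt_of_contDiffOn {U : Set Vec4} (hU : IsOpen U) {x : Vec4} (hx : x ∈ U)
    {f : Vec4 → ℝ} (hf : ContDiffOn ℝ (⊤ : ℕ∞) f U) : DifferentiableAt ℝ f x :=
  (hf.contDiffAt (hU.mem_nhds hx)).differentiableAt (by simp)

lemma pd_sum_mul {U : Set Vec4} (hU : IsOpen U) {x : Vec4} (hx : x ∈ U)
    {f g : Fin 4 → Vec4 → ℝ}
    (hf : ∀ ν, ContDiffOn ℝ (⊤ : ℕ∞) (f ν) U) (hg : ∀ ν, ContDiffOn ℝ (⊤ : ℕ∞) (g ν) U) (α : Fin 4) :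
    pd α (fun y => ∑ ν, f ν y * g ν y) x
      = ∑ ν, (pd α (f ν) x * g ν x + f ν x * pd α (g ν) x) := by
  unfold pd
  rw [fderiv_fun_sum (A := fun ν y => f ν y * g ν y) (fun ν _ => ((diffAt_of_contDiffOn hU hx (hf ν)).mul
      (diffAt_of_contDiffOn hU hx (hg ν))))]
  rw [ContinuousLinearMap.sum_apply]
  refine Finset.sum_congr rfl fun ν _ => ?_
  rw [fderiv_fun_mul (diffAt_of_contDiffOn hU hx (hf ν)) (diffAt_of_contDiffOn hU hx (hg ν))]
  simp only [ContinuousLinearMap.add_apply, ContinuousLinearMap.smul_apply, smul_eq_mul]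
  ring

set_option maxHeartbeats 4000000 in
/-- Torsion-free Carrollian case: reduced identities and distorsion decomposition. -/
theorem torsionfree_carrollian_distorsion_decomposition
    (U : Set Vec4) (hU : IsOpen U) (hne : U.Nonempty)
    (τ v : Tens1) (γ h : Tens2) (Γ : Tens3)
    (hτs : Smooth1 τ U) (hvs : Smooth1 v U) (hγs : Smooth2 γ U) (hhs : Smooth2 h U)
    (hΓs : Smooth3 Γ U)
    (hdual : DualityOn τ v γ h U)
    (hsymΓ : ∀ x ∈ U, ∀ α μ ν, torsion Γ x α μ ν = 0) :
    ∀ x ∈ U,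
      (∀ α μ, ∑ ν, v x ν * carRedQLow Γ τ v γ x α μ ν
          = -∑ ν, γ x μ ν * carRedQUp Γ v γ h x α ν) ∧
      (∀ μ ν, ∑ α, v x α * carRedQLow Γ τ v γ x α μ ν
          = -((∑ σ, γ x ν σ * carRedQUp Γ v γ h x μ σ)
            + (∑ σ, γ x μ σ * carRedQUp Γ v γ h x ν σ))) ∧
      (∀ α μ ν,
        Γ x α μ ν - compatConn v τ γ h x α μ ν
          = -(1/2) * (∑ σ, h x α σ * (carRedQLow Γ τ v γ x μ ν σ
                + carRedQLow Γ τ v γ x ν μ σ))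
            + (1/2) * (∑ σ, h x α σ * carRedQLow Γ τ v γ x σ μ ν)
            - (1/2) * v x α * (covOne Γ τ x μ ν + covOne Γ τ x ν μ)) := by
  intro x hx
  obtain ⟨gs, hs, tv, ht, gv, hg⟩ := hdual x hx
  have TF : ∀ a m n, Γ x a m n = Γ x a n m := fun a m n => by
    have h0 := hsymΓ x hx a m n
    unfold torsion at h0
    linarith
  have Dgsym : ∀ a m n, pd a (fun y => γ y m n) x = pd a (fun y => γ y n m) x :=
    fun a m n => pd_congr_of_eqOn hU hx (fun y hy => (hdual y hy).1 m n) a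
  have Dex : ∀ a m, ∑ n, (pd a (fun y => γ y m n) x * v x n
      + γ x m n * pd a (fun y => v y n) x) = 0 := by
    intro a m
    have h1 := pd_sum_mul hU hx (f := fun n y => γ y m n) (g := fun n y => v y n)
      (fun n => hγs m n) hvs a
    have h2 : pd a (fun y => ∑ n, γ y m n * v y n) x = pd a (fun _ => (0:ℝ)) x :=
      pd_congr_of_eqOn hU hx (fun y hy => (hdual y hy).2.2.2.2.1 m) a
    have h3 : pd a (fun _ : Vec4 => (0:ℝ)) x = 0 := by
      simp [pd]
    rw [← h1, h2, h3]
  have Thv : ∀ a, ∑ n, v x n * theta2 v γ x a n = 0 := by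
    intro a
    have Dex' := Dex
    have gv' := gv
    simp only [Fin.sum_univ_four] at Dex' gv'
    simp only [theta2, Fin.sum_univ_four]
    linear_combination
      (1/2 : ℝ) * (v x 0) * (Dex' 0 a)
      + (1/2 : ℝ) * (pd a (fun y => v y 0) x) * (gv' 0)
      + (1/2 : ℝ) * (v x 1) * (Dex' 1 a)
      + (1/2 : ℝ) * (pd a (fun y => v y 1) x) * (gv' 1)
      + (1/2 : ℝ) * (v x 2) * (Dex' 2 a)
      + (1/2 : ℝ) * (pd a (fun y => v y 2) x) * (gv' 2)
      + (1/2 : ℝ) * (v x 3) * (Dex' 3 a)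
      + (1/2 : ℝ) * (pd a (fun y => v y 3) x) * (gv' 3)
  have Thc : ∀ m a, (∑ n, γ x m n * ∑ s, theta2 v γ x a s * h x s n)
      = theta2 v γ x a m := by
    intro m a
    have e1 : ∀ n : Fin 4, γ x m n * ∑ s, theta2 v γ x a s * h x s n
        = ∑ s, theta2 v γ x a s * (h x s n * γ x n m) := by
      intro n
      rw [Finset.mul_sum]
      exact Finset.sum_congr rfl fun s _ => by rw [gs m n]; ring
    rw [Finset.sum_congr rfl fun n _ => e1 n, Finset.sum_comm]
    have e2 : ∀ s : Fin 4, ∑ n, theta2 v γ x a s * (h x s n * γ x n m)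
        = theta2 v γ x a s * (kron s m - v x s * τ x m) := by
      intro s
      rw [← Finset.mul_sum]
      congr 1
      exact hg s m
    rw [Finset.sum_congr rfl fun s _ => e2 s]
    have e3 : ∑ s, theta2 v γ x a s * (kron s m - v x s * τ x m)
        = (∑ s, theta2 v γ x a s * kron s m)
          - τ x m * ∑ s, v x s * theta2 v γ x a s := by
      rw [Finset.mul_sum, ← Finset.sum_sub_distrib]
      exact Finset.sum_congr rfl fun s _ => by ring
    rw [e3, Thv a, mul_zero, sub_zero]
    simp [kron, mul_ite, Finset.sum_ite_eq']
  have Gc : ∀ a m n, (∑ s, h x a s * ∑ r, Γ x r m n * γ x r s)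
      = Γ x a m n - v x a * ∑ r, Γ x r m n * τ x r := by
    intro a m n
    have e1 : ∀ s : Fin 4, h x a s * ∑ r, Γ x r m n * γ x r s
        = ∑ r, Γ x r m n * (h x a s * γ x s r) := by
      intro s
      rw [Finset.mul_sum]
      exact Finset.sum_congr rfl fun r _ => by rw [gs r s]; ring
    rw [Finset.sum_congr rfl fun s _ => e1 s, Finset.sum_comm]
    have e2 : ∀ r : Fin 4, ∑ s, Γ x r m n * (h x a s * γ x s r)
        = Γ x r m n * (kron a r - v x a * τ x r) := by
      intro r
      rw [← Finset.mul_sum]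
      congr 1
      exact hg a r
    rw [Finset.sum_congr rfl fun r _ => e2 r]
    have e3 : ∑ r, Γ x r m n * (kron a r - v x a * τ x r)
        = (∑ r, Γ x r m n * kron a r) - v x a * ∑ r, Γ x r m n * τ x r := by
      rw [Finset.mul_sum, ← Finset.sum_sub_distrib]
      exact Finset.sum_congr rfl fun r _ => by ring
    rw [e3]
    congr 1
    simp [kron, mul_ite, Finset.sum_ite_eq]
  have Dex' := Dex
  have gv' := gv
  have tv' := tv
  have ht' := ht
  have Thv' := Thv
  have Thc' := Thc
  have Gc' := Gc
  simp only [theta2, Fin.sum_univ_four] at Dex' gv' tv' ht' Thv' Thc' Gc'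
  refine ⟨fun α μ => ?_, fun μ ν => ?_, fun α μ ν => ?_⟩
  · simp only [carRedQLow, carRedQUp, covLow, covVec, theta2, Fin.sum_univ_four]
    linear_combination
      (Dex' α μ)
      + (-1 : ℝ) * (Γ x 0 α μ) * (gv' 0)
      + (-1 : ℝ) * (Γ x 1 α μ) * (gv' 1)
      + (-1 : ℝ) * (Γ x 2 α μ) * (gv' 2)
      + (-1 : ℝ) * (Γ x 3 α μ) * (gv' 3)
      + ((1/2 : ℝ) * (v x 0 * pd 0 (fun y => γ y μ α) x + v x 1 * pd 1 (fun y => γ y μ α) x + v x 2 * pd 2 (fun y => γ y μ α) x + v x 3 * pd 3 (fun y => γ y μ α) x + γ x 0 α * pd μ (fun y => v y 0) x + γ x 1 α * pd μ (fun y => v y 1) x + γ x 2 α * pd μ (fun y => v y 2) x + γ x 3 α * pd μ (fun y => v y 3) x + γ x μ 0 * pd α (fun y => v y 0) x + γ x μ 1 * pd α (fun y => v y 1) x + γ x μ 2 * pd α (fun y => v y 2) x + γ x μ 3 * pd α (fun y => v y 3) x)) * (tv')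
      + (-1 : ℝ) * (Thc' μ α)
      + (1/2 : ℝ) * (v x 0) * (Dgsym 0 μ α)
      + (1/2 : ℝ) * (pd μ (fun y => v y 0) x) * (gs 0 α)
      + (1/2 : ℝ) * (pd α (fun y => v y 0) x) * (gs μ 0)
      + (1/2 : ℝ) * (v x 1) * (Dgsym 1 μ α)
      + (1/2 : ℝ) * (pd μ (fun y => v y 1) x) * (gs 1 α)
      + (1/2 : ℝ) * (pd α (fun y => v y 1) x) * (gs μ 1)
      + (1/2 : ℝ) * (v x 2) * (Dgsym 2 μ α)
      + (1/2 : ℝ) * (pd μ (fun y => v y 2) x) * (gs 2 α)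
      + (1/2 : ℝ) * (pd α (fun y => v y 2) x) * (gs μ 2)
      + (1/2 : ℝ) * (v x 3) * (Dgsym 3 μ α)
      + (1/2 : ℝ) * (pd μ (fun y => v y 3) x) * (gs 3 α)
      + (1/2 : ℝ) * (pd α (fun y => v y 3) x) * (gs μ 3)
      + (τ x μ) * (Thv' α)
      + (1/2 : ℝ) * (τ x μ) * (v x 0) * (v x 0) * (Dgsym 0 0 α)
      + (1/2 : ℝ) * (τ x μ) * (v x 0) * (pd 0 (fun y => v y 0) x) * (gs 0 α)
      + (1/2 : ℝ) * (τ x μ) * (v x 0) * (pd α (fun y => v y 0) x) * (gs 0 0)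
      + (1/2 : ℝ) * (τ x μ) * (v x 0) * (v x 1) * (Dgsym 1 0 α)
      + (1/2 : ℝ) * (τ x μ) * (v x 0) * (pd 0 (fun y => v y 1) x) * (gs 1 α)
      + (1/2 : ℝ) * (τ x μ) * (v x 0) * (pd α (fun y => v y 1) x) * (gs 0 1)
      + (1/2 : ℝ) * (τ x μ) * (v x 0) * (v x 2) * (Dgsym 2 0 α)
      + (1/2 : ℝ) * (τ x μ) * (v x 0) * (pd 0 (fun y => v y 2) x) * (gs 2 α)
      + (1/2 : ℝ) * (τ x μ) * (v x 0) * (pd α (fun y => v y 2) x) * (gs 0 2)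
      + (1/2 : ℝ) * (τ x μ) * (v x 0) * (v x 3) * (Dgsym 3 0 α)
      + (1/2 : ℝ) * (τ x μ) * (v x 0) * (pd 0 (fun y => v y 3) x) * (gs 3 α)
      + (1/2 : ℝ) * (τ x μ) * (v x 0) * (pd α (fun y => v y 3) x) * (gs 0 3)
      + (1/2 : ℝ) * (τ x μ) * (v x 1) * (v x 0) * (Dgsym 0 1 α)
      + (1/2 : ℝ) * (τ x μ) * (v x 1) * (pd 1 (fun y => v y 0) x) * (gs 0 α)
      + (1/2 : ℝ) * (τ x μ) * (v x 1) * (pd α (fun y => v y 0) x) * (gs 1 0)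
      + (1/2 : ℝ) * (τ x μ) * (v x 1) * (v x 1) * (Dgsym 1 1 α)
      + (1/2 : ℝ) * (τ x μ) * (v x 1) * (pd 1 (fun y => v y 1) x) * (gs 1 α)
      + (1/2 : ℝ) * (τ x μ) * (v x 1) * (pd α (fun y => v y 1) x) * (gs 1 1)
      + (1/2 : ℝ) * (τ x μ) * (v x 1) * (v x 2) * (Dgsym 2 1 α)
      + (1/2 : ℝ) * (τ x μ) * (v x 1) * (pd 1 (fun y => v y 2) x) * (gs 2 α)
      + (1/2 : ℝ) * (τ x μ) * (v x 1) * (pd α (fun y => v y 2) x) * (gs 1 2)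
      + (1/2 : ℝ) * (τ x μ) * (v x 1) * (v x 3) * (Dgsym 3 1 α)
      + (1/2 : ℝ) * (τ x μ) * (v x 1) * (pd 1 (fun y => v y 3) x) * (gs 3 α)
      + (1/2 : ℝ) * (τ x μ) * (v x 1) * (pd α (fun y => v y 3) x) * (gs 1 3)
      + (1/2 : ℝ) * (τ x μ) * (v x 2) * (v x 0) * (Dgsym 0 2 α)
      + (1/2 : ℝ) * (τ x μ) * (v x 2) * (pd 2 (fun y => v y 0) x) * (gs 0 α)
      + (1/2 : ℝ) * (τ x μ) * (v x 2) * (pd α (fun y => v y 0) x) * (gs 2 0)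
      + (1/2 : ℝ) * (τ x μ) * (v x 2) * (v x 1) * (Dgsym 1 2 α)
      + (1/2 : ℝ) * (τ x μ) * (v x 2) * (pd 2 (fun y => v y 1) x) * (gs 1 α)
      + (1/2 : ℝ) * (τ x μ) * (v x 2) * (pd α (fun y => v y 1) x) * (gs 2 1)
      + (1/2 : ℝ) * (τ x μ) * (v x 2) * (v x 2) * (Dgsym 2 2 α)
      + (1/2 : ℝ) * (τ x μ) * (v x 2) * (pd 2 (fun y => v y 2) x) * (gs 2 α)
      + (1/2 : ℝ) * (τ x μ) * (v x 2) * (pd α (fun y => v y 2) x) * (gs 2 2)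
      + (1/2 : ℝ) * (τ x μ) * (v x 2) * (v x 3) * (Dgsym 3 2 α)
      + (1/2 : ℝ) * (τ x μ) * (v x 2) * (pd 2 (fun y => v y 3) x) * (gs 3 α)
      + (1/2 : ℝ) * (τ x μ) * (v x 2) * (pd α (fun y => v y 3) x) * (gs 2 3)
      + (1/2 : ℝ) * (τ x μ) * (v x 3) * (v x 0) * (Dgsym 0 3 α)
      + (1/2 : ℝ) * (τ x μ) * (v x 3) * (pd 3 (fun y => v y 0) x) * (gs 0 α)
      + (1/2 : ℝ) * (τ x μ) * (v x 3) * (pd α (fun y => v y 0) x) * (gs 3 0)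
      + (1/2 : ℝ) * (τ x μ) * (v x 3) * (v x 1) * (Dgsym 1 3 α)
      + (1/2 : ℝ) * (τ x μ) * (v x 3) * (pd 3 (fun y => v y 1) x) * (gs 1 α)
      + (1/2 : ℝ) * (τ x μ) * (v x 3) * (pd α (fun y => v y 1) x) * (gs 3 1)
      + (1/2 : ℝ) * (τ x μ) * (v x 3) * (v x 2) * (Dgsym 2 3 α)
      + (1/2 : ℝ) * (τ x μ) * (v x 3) * (pd 3 (fun y => v y 2) x) * (gs 2 α)
      + (1/2 : ℝ) * (τ x μ) * (v x 3) * (pd α (fun y => v y 2) x) * (gs 3 2)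
      + (1/2 : ℝ) * (τ x μ) * (v x 3) * (v x 3) * (Dgsym 3 3 α)
      + (1/2 : ℝ) * (τ x μ) * (v x 3) * (pd 3 (fun y => v y 3) x) * (gs 3 α)
      + (1/2 : ℝ) * (τ x μ) * (v x 3) * (pd α (fun y => v y 3) x) * (gs 3 3)
  · simp only [carRedQLow, carRedQUp, covLow, covVec, theta2, Fin.sum_univ_four]
    linear_combination
      (τ x μ) * (Thv' ν)
      + (τ x ν) * (Thv' μ)
      + (-1 : ℝ) * (Thc' ν μ)
      + (-1 : ℝ) * (Thc' μ ν)
      + (1/2 : ℝ) * (v x 0) * (Dgsym 0 μ ν)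
      + (1/2 : ℝ) * (pd μ (fun y => v y 0) x) * (gs ν 0)
      + (1/2 : ℝ) * (pd ν (fun y => v y 0) x) * (gs μ 0)
      + (1/2 : ℝ) * (v x 1) * (Dgsym 1 μ ν)
      + (1/2 : ℝ) * (pd μ (fun y => v y 1) x) * (gs ν 1)
      + (1/2 : ℝ) * (pd ν (fun y => v y 1) x) * (gs μ 1)
      + (1/2 : ℝ) * (v x 2) * (Dgsym 2 μ ν)
      + (1/2 : ℝ) * (pd μ (fun y => v y 2) x) * (gs ν 2)
      + (1/2 : ℝ) * (pd ν (fun y => v y 2) x) * (gs μ 2)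
      + (1/2 : ℝ) * (v x 3) * (Dgsym 3 μ ν)
      + (1/2 : ℝ) * (pd μ (fun y => v y 3) x) * (gs ν 3)
      + (1/2 : ℝ) * (pd ν (fun y => v y 3) x) * (gs μ 3)
      + (v x 0) * (γ x ν 0) * (TF 0 μ 0)
      + (v x 0) * (Γ x 0 0 μ) * (gs ν 0)
      + (v x 0) * (γ x μ 0) * (TF 0 ν 0)
      + (v x 1) * (γ x ν 0) * (TF 0 μ 1)
      + (v x 1) * (Γ x 0 1 μ) * (gs ν 0)
      + (v x 1) * (γ x μ 0) * (TF 0 ν 1)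
      + (v x 2) * (γ x ν 0) * (TF 0 μ 2)
      + (v x 2) * (Γ x 0 2 μ) * (gs ν 0)
      + (v x 2) * (γ x μ 0) * (TF 0 ν 2)
      + (v x 3) * (γ x ν 0) * (TF 0 μ 3)
      + (v x 3) * (Γ x 0 3 μ) * (gs ν 0)
      + (v x 3) * (γ x μ 0) * (TF 0 ν 3)
      + (v x 0) * (γ x ν 1) * (TF 1 μ 0)
      + (v x 0) * (Γ x 1 0 μ) * (gs ν 1)
      + (v x 0) * (γ x μ 1) * (TF 1 ν 0)
      + (v x 1) * (γ x ν 1) * (TF 1 μ 1)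
      + (v x 1) * (Γ x 1 1 μ) * (gs ν 1)
      + (v x 1) * (γ x μ 1) * (TF 1 ν 1)
      + (v x 2) * (γ x ν 1) * (TF 1 μ 2)
      + (v x 2) * (Γ x 1 2 μ) * (gs ν 1)
      + (v x 2) * (γ x μ 1) * (TF 1 ν 2)
      + (v x 3) * (γ x ν 1) * (TF 1 μ 3)
      + (v x 3) * (Γ x 1 3 μ) * (gs ν 1)
      + (v x 3) * (γ x μ 1) * (TF 1 ν 3)
      + (v x 0) * (γ x ν 2) * (TF 2 μ 0)
      + (v x 0) * (Γ x 2 0 μ) * (gs ν 2)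
      + (v x 0) * (γ x μ 2) * (TF 2 ν 0)
      + (v x 1) * (γ x ν 2) * (TF 2 μ 1)
      + (v x 1) * (Γ x 2 1 μ) * (gs ν 2)
      + (v x 1) * (γ x μ 2) * (TF 2 ν 1)
      + (v x 2) * (γ x ν 2) * (TF 2 μ 2)
      + (v x 2) * (Γ x 2 2 μ) * (gs ν 2)
      + (v x 2) * (γ x μ 2) * (TF 2 ν 2)
      + (v x 3) * (γ x ν 2) * (TF 2 μ 3)
      + (v x 3) * (Γ x 2 3 μ) * (gs ν 2)
      + (v x 3) * (γ x μ 2) * (TF 2 ν 3)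
      + (v x 0) * (γ x ν 3) * (TF 3 μ 0)
      + (v x 0) * (Γ x 3 0 μ) * (gs ν 3)
      + (v x 0) * (γ x μ 3) * (TF 3 ν 0)
      + (v x 1) * (γ x ν 3) * (TF 3 μ 1)
      + (v x 1) * (Γ x 3 1 μ) * (gs ν 3)
      + (v x 1) * (γ x μ 3) * (TF 3 ν 1)
      + (v x 2) * (γ x ν 3) * (TF 3 μ 2)
      + (v x 2) * (Γ x 3 2 μ) * (gs ν 3)
      + (v x 2) * (γ x μ 3) * (TF 3 ν 2)
      + (v x 3) * (γ x ν 3) * (TF 3 μ 3)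
      + (v x 3) * (Γ x 3 3 μ) * (gs ν 3)
      + (v x 3) * (γ x μ 3) * (TF 3 ν 3)
  · simp only [compatConn, carRedQLow, covLow, covOne, theta2, Fin.sum_univ_four]
    linear_combination
      (-1 : ℝ) * (Gc' α μ ν)
      + (1/2 : ℝ) * ((1/2 : ℝ) * (v x 0 * pd 0 (fun y => γ y ν μ) x + v x 1 * pd 1 (fun y => γ y ν μ) x + v x 2 * pd 2 (fun y => γ y ν μ) x + v x 3 * pd 3 (fun y => γ y ν μ) x + γ x 0 μ * pd ν (fun y => v y 0) x + γ x 1 μ * pd ν (fun y => v y 1) x + γ x 2 μ * pd ν (fun y => v y 2) x + γ x 3 μ * pd ν (fun y => v y 3) x + γ x ν 0 * pd μ (fun y => v y 0) x + γ x ν 1 * pd μ (fun y => v y 1) x + γ x ν 2 * pd μ (fun y => v y 2) x + γ x ν 3 * pd μ (fun y => v y 3) x)) * (ht' α)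
      + (1/2 : ℝ) * ((1/2 : ℝ) * (v x 0 * pd 0 (fun y => γ y μ ν) x + v x 1 * pd 1 (fun y => γ y μ ν) x + v x 2 * pd 2 (fun y => γ y μ ν) x + v x 3 * pd 3 (fun y => γ y μ ν) x + γ x 0 ν * pd μ (fun y => v y 0) x + γ x 1 ν * pd μ (fun y => v y 1) x + γ x 2 ν * pd μ (fun y => v y 2) x + γ x 3 ν * pd μ (fun y => v y 3) x + γ x μ 0 * pd ν (fun y => v y 0) x + γ x μ 1 * pd ν (fun y => v y 1) x + γ x μ 2 * pd ν (fun y => v y 2) x + γ x μ 3 * pd ν (fun y => v y 3) x)) * (ht' α)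
      + (1/4 : ℝ) * (h x α 0) * (τ x ν) * (v x 0) * (Dgsym 0 0 μ)
      + (1/4 : ℝ) * (h x α 0) * (τ x ν) * (pd 0 (fun y => v y 0) x) * (gs 0 μ)
      + (1/4 : ℝ) * (h x α 0) * (τ x ν) * (pd μ (fun y => v y 0) x) * (gs 0 0)
      + (1/4 : ℝ) * (h x α 0) * (τ x ν) * (v x 1) * (Dgsym 1 0 μ)
      + (1/4 : ℝ) * (h x α 0) * (τ x ν) * (pd 0 (fun y => v y 1) x) * (gs 1 μ)
      + (1/4 : ℝ) * (h x α 0) * (τ x ν) * (pd μ (fun y => v y 1) x) * (gs 0 1)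
      + (1/4 : ℝ) * (h x α 0) * (τ x ν) * (v x 2) * (Dgsym 2 0 μ)
      + (1/4 : ℝ) * (h x α 0) * (τ x ν) * (pd 0 (fun y => v y 2) x) * (gs 2 μ)
      + (1/4 : ℝ) * (h x α 0) * (τ x ν) * (pd μ (fun y => v y 2) x) * (gs 0 2)
      + (1/4 : ℝ) * (h x α 0) * (τ x ν) * (v x 3) * (Dgsym 3 0 μ)
      + (1/4 : ℝ) * (h x α 0) * (τ x ν) * (pd 0 (fun y => v y 3) x) * (gs 3 μ)
      + (1/4 : ℝ) * (h x α 0) * (τ x ν) * (pd μ (fun y => v y 3) x) * (gs 0 3)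
      + (1/4 : ℝ) * (h x α 0) * (τ x μ) * (v x 0) * (Dgsym 0 0 ν)
      + (1/4 : ℝ) * (h x α 0) * (τ x μ) * (pd 0 (fun y => v y 0) x) * (gs 0 ν)
      + (1/4 : ℝ) * (h x α 0) * (τ x μ) * (pd ν (fun y => v y 0) x) * (gs 0 0)
      + (1/4 : ℝ) * (h x α 0) * (τ x μ) * (v x 1) * (Dgsym 1 0 ν)
      + (1/4 : ℝ) * (h x α 0) * (τ x μ) * (pd 0 (fun y => v y 1) x) * (gs 1 ν)
      + (1/4 : ℝ) * (h x α 0) * (τ x μ) * (pd ν (fun y => v y 1) x) * (gs 0 1)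
      + (1/4 : ℝ) * (h x α 0) * (τ x μ) * (v x 2) * (Dgsym 2 0 ν)
      + (1/4 : ℝ) * (h x α 0) * (τ x μ) * (pd 0 (fun y => v y 2) x) * (gs 2 ν)
      + (1/4 : ℝ) * (h x α 0) * (τ x μ) * (pd ν (fun y => v y 2) x) * (gs 0 2)
      + (1/4 : ℝ) * (h x α 0) * (τ x μ) * (v x 3) * (Dgsym 3 0 ν)
      + (1/4 : ℝ) * (h x α 0) * (τ x μ) * (pd 0 (fun y => v y 3) x) * (gs 3 ν)
      + (1/4 : ℝ) * (h x α 0) * (τ x μ) * (pd ν (fun y => v y 3) x) * (gs 0 3)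
      + (1/4 : ℝ) * (h x α 1) * (τ x ν) * (v x 0) * (Dgsym 0 1 μ)
      + (1/4 : ℝ) * (h x α 1) * (τ x ν) * (pd 1 (fun y => v y 0) x) * (gs 0 μ)
      + (1/4 : ℝ) * (h x α 1) * (τ x ν) * (pd μ (fun y => v y 0) x) * (gs 1 0)
      + (1/4 : ℝ) * (h x α 1) * (τ x ν) * (v x 1) * (Dgsym 1 1 μ)
      + (1/4 : ℝ) * (h x α 1) * (τ x ν) * (pd 1 (fun y => v y 1) x) * (gs 1 μ)
      + (1/4 : ℝ) * (h x α 1) * (τ x ν) * (pd μ (fun y => v y 1) x) * (gs 1 1)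
      + (1/4 : ℝ) * (h x α 1) * (τ x ν) * (v x 2) * (Dgsym 2 1 μ)
      + (1/4 : ℝ) * (h x α 1) * (τ x ν) * (pd 1 (fun y => v y 2) x) * (gs 2 μ)
      + (1/4 : ℝ) * (h x α 1) * (τ x ν) * (pd μ (fun y => v y 2) x) * (gs 1 2)
      + (1/4 : ℝ) * (h x α 1) * (τ x ν) * (v x 3) * (Dgsym 3 1 μ)
      + (1/4 : ℝ) * (h x α 1) * (τ x ν) * (pd 1 (fun y => v y 3) x) * (gs 3 μ)
      + (1/4 : ℝ) * (h x α 1) * (τ x ν) * (pd μ (fun y => v y 3) x) * (gs 1 3)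
      + (1/4 : ℝ) * (h x α 1) * (τ x μ) * (v x 0) * (Dgsym 0 1 ν)
      + (1/4 : ℝ) * (h x α 1) * (τ x μ) * (pd 1 (fun y => v y 0) x) * (gs 0 ν)
      + (1/4 : ℝ) * (h x α 1) * (τ x μ) * (pd ν (fun y => v y 0) x) * (gs 1 0)
      + (1/4 : ℝ) * (h x α 1) * (τ x μ) * (v x 1) * (Dgsym 1 1 ν)
      + (1/4 : ℝ) * (h x α 1) * (τ x μ) * (pd 1 (fun y => v y 1) x) * (gs 1 ν)
      + (1/4 : ℝ) * (h x α 1) * (τ x μ) * (pd ν (fun y => v y 1) x) * (gs 1 1)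
      + (1/4 : ℝ) * (h x α 1) * (τ x μ) * (v x 2) * (Dgsym 2 1 ν)
      + (1/4 : ℝ) * (h x α 1) * (τ x μ) * (pd 1 (fun y => v y 2) x) * (gs 2 ν)
      + (1/4 : ℝ) * (h x α 1) * (τ x μ) * (pd ν (fun y => v y 2) x) * (gs 1 2)
      + (1/4 : ℝ) * (h x α 1) * (τ x μ) * (v x 3) * (Dgsym 3 1 ν)
      + (1/4 : ℝ) * (h x α 1) * (τ x μ) * (pd 1 (fun y => v y 3) x) * (gs 3 ν)
      + (1/4 : ℝ) * (h x α 1) * (τ x μ) * (pd ν (fun y => v y 3) x) * (gs 1 3)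
      + (1/4 : ℝ) * (h x α 2) * (τ x ν) * (v x 0) * (Dgsym 0 2 μ)
      + (1/4 : ℝ) * (h x α 2) * (τ x ν) * (pd 2 (fun y => v y 0) x) * (gs 0 μ)
      + (1/4 : ℝ) * (h x α 2) * (τ x ν) * (pd μ (fun y => v y 0) x) * (gs 2 0)
      + (1/4 : ℝ) * (h x α 2) * (τ x ν) * (v x 1) * (Dgsym 1 2 μ)
      + (1/4 : ℝ) * (h x α 2) * (τ x ν) * (pd 2 (fun y => v y 1) x) * (gs 1 μ)
      + (1/4 : ℝ) * (h x α 2) * (τ x ν) * (pd μ (fun y => v y 1) x) * (gs 2 1)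
      + (1/4 : ℝ) * (h x α 2) * (τ x ν) * (v x 2) * (Dgsym 2 2 μ)
      + (1/4 : ℝ) * (h x α 2) * (τ x ν) * (pd 2 (fun y => v y 2) x) * (gs 2 μ)
      + (1/4 : ℝ) * (h x α 2) * (τ x ν) * (pd μ (fun y => v y 2) x) * (gs 2 2)
      + (1/4 : ℝ) * (h x α 2) * (τ x ν) * (v x 3) * (Dgsym 3 2 μ)
      + (1/4 : ℝ) * (h x α 2) * (τ x ν) * (pd 2 (fun y => v y 3) x) * (gs 3 μ)
      + (1/4 : ℝ) * (h x α 2) * (τ x ν) * (pd μ (fun y => v y 3) x) * (gs 2 3)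
      + (1/4 : ℝ) * (h x α 2) * (τ x μ) * (v x 0) * (Dgsym 0 2 ν)
      + (1/4 : ℝ) * (h x α 2) * (τ x μ) * (pd 2 (fun y => v y 0) x) * (gs 0 ν)
      + (1/4 : ℝ) * (h x α 2) * (τ x μ) * (pd ν (fun y => v y 0) x) * (gs 2 0)
      + (1/4 : ℝ) * (h x α 2) * (τ x μ) * (v x 1) * (Dgsym 1 2 ν)
      + (1/4 : ℝ) * (h x α 2) * (τ x μ) * (pd 2 (fun y => v y 1) x) * (gs 1 ν)
      + (1/4 : ℝ) * (h x α 2) * (τ x μ) * (pd ν (fun y => v y 1) x) * (gs 2 1)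
      + (1/4 : ℝ) * (h x α 2) * (τ x μ) * (v x 2) * (Dgsym 2 2 ν)
      + (1/4 : ℝ) * (h x α 2) * (τ x μ) * (pd 2 (fun y => v y 2) x) * (gs 2 ν)
      + (1/4 : ℝ) * (h x α 2) * (τ x μ) * (pd ν (fun y => v y 2) x) * (gs 2 2)
      + (1/4 : ℝ) * (h x α 2) * (τ x μ) * (v x 3) * (Dgsym 3 2 ν)
      + (1/4 : ℝ) * (h x α 2) * (τ x μ) * (pd 2 (fun y => v y 3) x) * (gs 3 ν)
      + (1/4 : ℝ) * (h x α 2) * (τ x μ) * (pd ν (fun y => v y 3) x) * (gs 2 3)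
      + (1/4 : ℝ) * (h x α 3) * (τ x ν) * (v x 0) * (Dgsym 0 3 μ)
      + (1/4 : ℝ) * (h x α 3) * (τ x ν) * (pd 3 (fun y => v y 0) x) * (gs 0 μ)
      + (1/4 : ℝ) * (h x α 3) * (τ x ν) * (pd μ (fun y => v y 0) x) * (gs 3 0)
      + (1/4 : ℝ) * (h x α 3) * (τ x ν) * (v x 1) * (Dgsym 1 3 μ)
      + (1/4 : ℝ) * (h x α 3) * (τ x ν) * (pd 3 (fun y => v y 1) x) * (gs 1 μ)
      + (1/4 : ℝ) * (h x α 3) * (τ x ν) * (pd μ (fun y => v y 1) x) * (gs 3 1)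
      + (1/4 : ℝ) * (h x α 3) * (τ x ν) * (v x 2) * (Dgsym 2 3 μ)
      + (1/4 : ℝ) * (h x α 3) * (τ x ν) * (pd 3 (fun y => v y 2) x) * (gs 2 μ)
      + (1/4 : ℝ) * (h x α 3) * (τ x ν) * (pd μ (fun y => v y 2) x) * (gs 3 2)
      + (1/4 : ℝ) * (h x α 3) * (τ x ν) * (v x 3) * (Dgsym 3 3 μ)
      + (1/4 : ℝ) * (h x α 3) * (τ x ν) * (pd 3 (fun y => v y 3) x) * (gs 3 μ)
      + (1/4 : ℝ) * (h x α 3) * (τ x ν) * (pd μ (fun y => v y 3) x) * (gs 3 3)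
      + (1/4 : ℝ) * (h x α 3) * (τ x μ) * (v x 0) * (Dgsym 0 3 ν)
      + (1/4 : ℝ) * (h x α 3) * (τ x μ) * (pd 3 (fun y => v y 0) x) * (gs 0 ν)
      + (1/4 : ℝ) * (h x α 3) * (τ x μ) * (pd ν (fun y => v y 0) x) * (gs 3 0)
      + (1/4 : ℝ) * (h x α 3) * (τ x μ) * (v x 1) * (Dgsym 1 3 ν)
      + (1/4 : ℝ) * (h x α 3) * (τ x μ) * (pd 3 (fun y => v y 1) x) * (gs 1 ν)
      + (1/4 : ℝ) * (h x α 3) * (τ x μ) * (pd ν (fun y => v y 1) x) * (gs 3 1)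
      + (1/4 : ℝ) * (h x α 3) * (τ x μ) * (v x 2) * (Dgsym 2 3 ν)
      + (1/4 : ℝ) * (h x α 3) * (τ x μ) * (pd 3 (fun y => v y 2) x) * (gs 2 ν)
      + (1/4 : ℝ) * (h x α 3) * (τ x μ) * (pd ν (fun y => v y 2) x) * (gs 3 2)
      + (1/4 : ℝ) * (h x α 3) * (τ x μ) * (v x 3) * (Dgsym 3 3 ν)
      + (1/4 : ℝ) * (h x α 3) * (τ x μ) * (pd 3 (fun y => v y 3) x) * (gs 3 ν)
      + (1/4 : ℝ) * (h x α 3) * (τ x μ) * (pd ν (fun y => v y 3) x) * (gs 3 3)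
      + (-1/2 : ℝ) * (v x α) * (τ x 0) * (TF 0 ν μ)
      + (-1/2 : ℝ) * (v x α) * (τ x 1) * (TF 1 ν μ)
      + (-1/2 : ℝ) * (v x α) * (τ x 2) * (TF 2 ν μ)
      + (-1/2 : ℝ) * (v x α) * (τ x 3) * (TF 3 ν μ)
      + (-1/2 : ℝ) * (h x α 0) * (γ x 0 0) * (TF 0 ν μ)
      + (1/2 : ℝ) * (h x α 0) * (γ x 0 ν) * (TF 0 0 μ)
      + (1/2 : ℝ) * (h x α 0) * (Γ x 0 μ 0) * (gs 0 ν)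
      + (1/2 : ℝ) * (h x α 0) * (γ x μ 0) * (TF 0 0 ν)
      + (-1/2 : ℝ) * (h x α 0) * (γ x 1 0) * (TF 1 ν μ)
      + (1/2 : ℝ) * (h x α 0) * (γ x 1 ν) * (TF 1 0 μ)
      + (1/2 : ℝ) * (h x α 0) * (Γ x 1 μ 0) * (gs 1 ν)
      + (1/2 : ℝ) * (h x α 0) * (γ x μ 1) * (TF 1 0 ν)
      + (-1/2 : ℝ) * (h x α 0) * (γ x 2 0) * (TF 2 ν μ)
      + (1/2 : ℝ) * (h x α 0) * (γ x 2 ν) * (TF 2 0 μ)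
      + (1/2 : ℝ) * (h x α 0) * (Γ x 2 μ 0) * (gs 2 ν)
      + (1/2 : ℝ) * (h x α 0) * (γ x μ 2) * (TF 2 0 ν)
      + (-1/2 : ℝ) * (h x α 0) * (γ x 3 0) * (TF 3 ν μ)
      + (1/2 : ℝ) * (h x α 0) * (γ x 3 ν) * (TF 3 0 μ)
      + (1/2 : ℝ) * (h x α 0) * (Γ x 3 μ 0) * (gs 3 ν)
      + (1/2 : ℝ) * (h x α 0) * (γ x μ 3) * (TF 3 0 ν)
      + (-1/2 : ℝ) * (h x α 1) * (γ x 0 1) * (TF 0 ν μ)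
      + (1/2 : ℝ) * (h x α 1) * (γ x 0 ν) * (TF 0 1 μ)
      + (1/2 : ℝ) * (h x α 1) * (Γ x 0 μ 1) * (gs 0 ν)
      + (1/2 : ℝ) * (h x α 1) * (γ x μ 0) * (TF 0 1 ν)
      + (-1/2 : ℝ) * (h x α 1) * (γ x 1 1) * (TF 1 ν μ)
      + (1/2 : ℝ) * (h x α 1) * (γ x 1 ν) * (TF 1 1 μ)
      + (1/2 : ℝ) * (h x α 1) * (Γ x 1 μ 1) * (gs 1 ν)
      + (1/2 : ℝ) * (h x α 1) * (γ x μ 1) * (TF 1 1 ν)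
      + (-1/2 : ℝ) * (h x α 1) * (γ x 2 1) * (TF 2 ν μ)
      + (1/2 : ℝ) * (h x α 1) * (γ x 2 ν) * (TF 2 1 μ)
      + (1/2 : ℝ) * (h x α 1) * (Γ x 2 μ 1) * (gs 2 ν)
      + (1/2 : ℝ) * (h x α 1) * (γ x μ 2) * (TF 2 1 ν)
      + (-1/2 : ℝ) * (h x α 1) * (γ x 3 1) * (TF 3 ν μ)
      + (1/2 : ℝ) * (h x α 1) * (γ x 3 ν) * (TF 3 1 μ)
      + (1/2 : ℝ) * (h x α 1) * (Γ x 3 μ 1) * (gs 3 ν)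
      + (1/2 : ℝ) * (h x α 1) * (γ x μ 3) * (TF 3 1 ν)
      + (-1/2 : ℝ) * (h x α 2) * (γ x 0 2) * (TF 0 ν μ)
      + (1/2 : ℝ) * (h x α 2) * (γ x 0 ν) * (TF 0 2 μ)
      + (1/2 : ℝ) * (h x α 2) * (Γ x 0 μ 2) * (gs 0 ν)
      + (1/2 : ℝ) * (h x α 2) * (γ x μ 0) * (TF 0 2 ν)
      + (-1/2 : ℝ) * (h x α 2) * (γ x 1 2) * (TF 1 ν μ)
      + (1/2 : ℝ) * (h x α 2) * (γ x 1 ν) * (TF 1 2 μ)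
      + (1/2 : ℝ) * (h x α 2) * (Γ x 1 μ 2) * (gs 1 ν)
      + (1/2 : ℝ) * (h x α 2) * (γ x μ 1) * (TF 1 2 ν)
      + (-1/2 : ℝ) * (h x α 2) * (γ x 2 2) * (TF 2 ν μ)
      + (1/2 : ℝ) * (h x α 2) * (γ x 2 ν) * (TF 2 2 μ)
      + (1/2 : ℝ) * (h x α 2) * (Γ x 2 μ 2) * (gs 2 ν)
      + (1/2 : ℝ) * (h x α 2) * (γ x μ 2) * (TF 2 2 ν)
      + (-1/2 : ℝ) * (h x α 2) * (γ x 3 2) * (TF 3 ν μ)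
      + (1/2 : ℝ) * (h x α 2) * (γ x 3 ν) * (TF 3 2 μ)
      + (1/2 : ℝ) * (h x α 2) * (Γ x 3 μ 2) * (gs 3 ν)
      + (1/2 : ℝ) * (h x α 2) * (γ x μ 3) * (TF 3 2 ν)
      + (-1/2 : ℝ) * (h x α 3) * (γ x 0 3) * (TF 0 ν μ)
      + (1/2 : ℝ) * (h x α 3) * (γ x 0 ν) * (TF 0 3 μ)
      + (1/2 : ℝ) * (h x α 3) * (Γ x 0 μ 3) * (gs 0 ν)
      + (1/2 : ℝ) * (h x α 3) * (γ x μ 0) * (TF 0 3 ν)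
      + (-1/2 : ℝ) * (h x α 3) * (γ x 1 3) * (TF 1 ν μ)
      + (1/2 : ℝ) * (h x α 3) * (γ x 1 ν) * (TF 1 3 μ)
      + (1/2 : ℝ) * (h x α 3) * (Γ x 1 μ 3) * (gs 1 ν)
      + (1/2 : ℝ) * (h x α 3) * (γ x μ 1) * (TF 1 3 ν)
      + (-1/2 : ℝ) * (h x α 3) * (γ x 2 3) * (TF 2 ν μ)
      + (1/2 : ℝ) * (h x α 3) * (γ x 2 ν) * (TF 2 3 μ)
      + (1/2 : ℝ) * (h x α 3) * (Γ x 2 μ 3) * (gs 2 ν)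
      + (1/2 : ℝ) * (h x α 3) * (γ x μ 2) * (TF 2 3 ν)
      + (-1/2 : ℝ) * (h x α 3) * (γ x 3 3) * (TF 3 ν μ)
      + (1/2 : ℝ) * (h x α 3) * (γ x 3 ν) * (TF 3 3 μ)
      + (1/2 : ℝ) * (h x α 3) * (Γ x 3 μ 3) * (gs 3 ν)
      + (1/2 : ℝ) * (h x α 3) * (γ x μ 3) * (TF 3 3 ν)
end

section
/- (Form of the next-to-leading orders in the Carrollian limit ansatz.) Assume at every point of U: v^μ ≠ 0 (as a vector), γ_{μν} is symmetric with γ_{μν} v^ν = 0 and radical exactly the span of v (i.e., if γ_{μν} w^ν = 0 for all μ then w is a scalar multiple of v). Let g₀^{μν} and g₂_{μν} be smooth symmetric tensors on U satisfying g₀^{μα} γ_{αν} − v^μ v^α g₂_{αν} = δ^μ_ν at every point. Define τ_μ := − g₂_{μν} v^ν, k_{μν} := g₂_{μν} + τ_μ τ_ν, φ := −(1/2) τ_μ g₀^{μν} τ_ν, and h^{μν} := g₀^{μν} + 2φ v^μ v^ν. Then at every point of U: τ_μ v^μ = 1; k_{μν} v^ν = 0; h^{μν} τ_ν = 0; and h^{μσ}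 γ_{σν} = δ^μ_ν − v^μ τ_ν. In particular g₂_{μν} = − τ_μ τ_ν + k_{μν} and g₀^{μν} = h^{μν} − 2φ v^μ v^ν. -/
/-- Form of the next-to-leading orders in the Carrollian limit ansatz: from the order-ε⁰
coefficient `g₀^{μα} γ_{αν} − v^μ v^α g₂_{αν} = δ^μ_ν` of `g^{μα}(ε) g_{αν}(ε) = δ^μ_ν`,
defining `τ_μ := −g₂_{μν} v^ν`, `k_{μν} := g₂_{μν} + τ_μ τ_ν`, `φ := −(1/2) τ_μ g₀^{μν} τ_ν`,
`h^{μν} := g₀^{μν} + 2φ v^μ v^ν`, one gets `τ_μ v^μ = 1`, `k_{μν} v^ν = 0`, `h^{μν} τ_ν = 0`,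
`h^{μσ} γ_{σν} = δ^μ_ν − v^μ τ_ν`; in particular `g₂ = −τ⊗τ + k`, `g₀ = h − 2φ v⊗v`. -/
theorem carrollian_limit_nlo_form
    (U : Set Vec4) (hU : IsOpen U) (hne : U.Nonempty)
    (v : Tens1) (γ g₀ g₂ : Tens2)
    (hvs : Smooth1 v U) (hγs : Smooth2 γ U) (hg₀s : Smooth2 g₀ U) (hg₂s : Smooth2 g₂ U)
    (hvne : ∀ x ∈ U, v x ≠ 0)
    (hγsym : ∀ x ∈ U, ∀ μ ν, γ x μ ν = γ x ν μ)
    (hγv : ∀ x ∈ U, ∀ μ, ∑ ν, γ x μ ν * v x ν = 0)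
    (hγrad : ∀ x ∈ U, ∀ w : Fin 4 → ℝ, (∀ μ, ∑ ν, γ x μ ν * w ν = 0) → ∃ c : ℝ, w = c • v x)
    (hg₀sym : ∀ x ∈ U, ∀ μ ν, g₀ x μ ν = g₀ x ν μ)
    (hg₂sym : ∀ x ∈ U, ∀ μ ν, g₂ x μ ν = g₂ x ν μ)
    (hrel : ∀ x ∈ U, ∀ μ ν,
      (∑ α, g₀ x μ α * γ x α ν) - v x μ * (∑ α, v x α * g₂ x α ν) = kron μ ν)
    (τ : Tens1) (k : Tens2) (φ : Vec4 → ℝ) (h : Tens2)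
    (hτdef : ∀ x μ, τ x μ = -∑ ν, g₂ x μ ν * v x ν)
    (hkdef : ∀ x μ ν, k x μ ν = g₂ x μ ν + τ x μ * τ x ν)
    (hφdef : ∀ x, φ x = -(1/2) * ∑ μ, ∑ ν, τ x μ * g₀ x μ ν * τ x ν)
    (hhdef : ∀ x μ ν, h x μ ν = g₀ x μ ν + 2 * φ x * v x μ * v x ν) :
    ∀ x ∈ U,
      (∑ μ, τ x μ * v x μ = 1) ∧
      (∀ μ, ∑ ν, k x μ ν * v x ν = 0) ∧
      (∀ μ, ∑ ν, h x μ ν * τ x ν = 0) ∧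
      (∀ μ ν, ∑ σ, h x μ σ * γ x σ ν = kron μ ν - v x μ * τ x ν) ∧
      (∀ μ ν, g₂ x μ ν = -(τ x μ * τ x ν) + k x μ ν) ∧
      (∀ μ ν, g₀ x μ ν = h x μ ν - 2 * φ x * v x μ * v x ν) := by
  intro x hx
  obtain ⟨μ₀, hμ₀⟩ : ∃ μ, v x μ ≠ 0 := by
    by_contra hcon
    push_neg at hcon
    exact hvne x hx (funext fun μ => hcon μ)
  have hγv' : ∀ μ, ∑ ν, γ x ν μ * v x ν = 0 := by
    intro μ
    rw [← hγv x hx μ]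
    exact Finset.sum_congr rfl fun ν _ => by rw [hγsym x hx]
  have hvg₂ : ∀ ν, ∑ α, v x α * g₂ x α ν = - τ x ν := by
    intro ν
    rw [hτdef, neg_neg]
    exact Finset.sum_congr rfl fun α _ => by rw [hg₂sym x hx ν α, mul_comm]
  have hrel' : ∀ μ ν, ∑ α, g₀ x μ α * γ x α ν = kron μ ν - v x μ * τ x ν := by
    intro μ ν
    have h0 := hrel x hx μ ν
    rw [hvg₂ ν] at h0
    linarith
  have hτv : ∑ μ, τ x μ * v x μ = 1 := by
    have h1 : ∑ ν, (∑ α, g₀ x μ₀ α * γ x α ν) * v x ν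
        = ∑ ν, (kron μ₀ ν - v x μ₀ * τ x ν) * v x ν :=
      Finset.sum_congr rfl fun ν _ => by rw [hrel' μ₀ ν]
    have hL : ∑ ν, (∑ α, g₀ x μ₀ α * γ x α ν) * v x ν = 0 := by
      simp only [Finset.sum_mul]
      rw [Finset.sum_comm]
      refine Finset.sum_eq_zero fun α _ => ?_
      simp only [mul_assoc, ← Finset.mul_sum]
      rw [hγv x hx α, mul_zero]
    have hR : ∑ ν, (kron μ₀ ν - v x μ₀ * τ x ν) * v x ν
        = v x μ₀ - v x μ₀ * ∑ ν, τ x ν * v x ν := by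
      simp only [sub_mul]
      rw [Finset.sum_sub_distrib]
      congr 1
      · simp [kron, ite_mul]
      · rw [Finset.mul_sum]
        exact Finset.sum_congr rfl fun ν _ => by ring
    rw [hL, hR] at h1
    have h2 : v x μ₀ * (1 - ∑ ν, τ x ν * v x ν) = 0 := by linarith
    rcases mul_eq_zero.mp h2 with h3 | h3
    · exact absurd h3 hμ₀
    · linarith
  have hg₂v : ∀ μ, ∑ ν, g₂ x μ ν * v x ν = - τ x μ := fun μ => by
    rw [hτdef, neg_neg]
  have hkv : ∀ μ, ∑ ν, k x μ ν * v x ν = 0 := by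
    intro μ
    have h1 : ∑ ν, k x μ ν * v x ν
        = (∑ ν, g₂ x μ ν * v x ν) + τ x μ * ∑ ν, τ x ν * v x ν := by
      rw [Finset.mul_sum, ← Finset.sum_add_distrib]
      exact Finset.sum_congr rfl fun ν _ => by rw [hkdef]; ring
    rw [h1, hg₂v, hτv]; ring
  have hγw : ∀ μ, ∑ ν, γ x μ ν * (fun α => ∑ ρ, g₀ x α ρ * τ x ρ) ν = 0 := by
    intro μ
    have step : ∑ ν, γ x μ ν * (∑ ρ, g₀ x ν ρ * τ x ρ)
        = ∑ β, (∑ α, g₀ x β α * γ x α μ) * τ x β := by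
      simp only [Finset.mul_sum, Finset.sum_mul]
      rw [Finset.sum_comm]
      refine Finset.sum_congr rfl fun β _ => Finset.sum_congr rfl fun α _ => ?_
      rw [hγsym x hx μ α, hg₀sym x hx α β]; ring
    have step2 : ∑ β, (∑ α, g₀ x β α * γ x α μ) * τ x β
        = ∑ β, (kron β μ - v x β * τ x μ) * τ x β :=
      Finset.sum_congr rfl fun β _ => by rw [hrel' β μ]
    have e1 : ∑ β, kron β μ * τ x β = τ x μ := by simp [kron, ite_mul]
    have e2 : ∑ β, v x β * τ x μ * τ x β = τ x μ := by
      have : ∑ β, v x β * τ x μ * τ x β = τ x μ * ∑ β, τ x β * v x β := by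
        rw [Finset.mul_sum]
        exact Finset.sum_congr rfl fun β _ => by ring
      rw [this, hτv, mul_one]
    show ∑ ν, γ x μ ν * (∑ ρ, g₀ x ν ρ * τ x ρ) = 0
    rw [step, step2]
    simp only [sub_mul]
    rw [Finset.sum_sub_distrib, e1, e2, sub_self]
  obtain ⟨c, hc⟩ := hγrad x hx (fun α => ∑ ρ, g₀ x α ρ * τ x ρ) hγw
  have hcα : ∀ α, ∑ ρ, g₀ x α ρ * τ x ρ = c * v x α := fun α => by
    have := congrFun hc α
    simpa using this
  have hcval : c = -2 * φ x := by
    have h1 : ∑ μ, τ x μ * (∑ ρ, g₀ x μ ρ * τ x ρ) = c := by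
      have : ∑ μ, τ x μ * (∑ ρ, g₀ x μ ρ * τ x ρ) = c * ∑ μ, τ x μ * v x μ := by
        rw [Finset.mul_sum]
        exact Finset.sum_congr rfl fun μ _ => by rw [hcα μ]; ring
      rw [this, hτv, mul_one]
    have h2 : ∑ μ, τ x μ * (∑ ρ, g₀ x μ ρ * τ x ρ)
        = ∑ μ, ∑ ρ, τ x μ * g₀ x μ ρ * τ x ρ := by
      refine Finset.sum_congr rfl fun μ _ => ?_
      rw [Finset.mul_sum]
      exact Finset.sum_congr rfl fun ρ _ => by ring
    rw [h2] at h1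
    rw [hφdef]
    linarith
  have hg₀τ : ∀ μ, ∑ ν, g₀ x μ ν * τ x ν = -2 * φ x * v x μ := fun μ => by
    rw [hcα μ, hcval]
  have hhτ : ∀ μ, ∑ ν, h x μ ν * τ x ν = 0 := by
    intro μ
    have h1 : ∑ ν, h x μ ν * τ x ν
        = (∑ ν, g₀ x μ ν * τ x ν) + 2 * φ x * v x μ * ∑ ν, τ x ν * v x ν := by
      rw [Finset.mul_sum, ← Finset.sum_add_distrib]
      exact Finset.sum_congr rfl fun ν _ => by rw [hhdef]; ring
    rw [h1, hg₀τ, hτv]; ring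
  have hhγ : ∀ μ ν, ∑ σ, h x μ σ * γ x σ ν = kron μ ν - v x μ * τ x ν := by
    intro μ ν
    have h1 : ∑ σ, h x μ σ * γ x σ ν
        = (∑ σ, g₀ x μ σ * γ x σ ν) + 2 * φ x * v x μ * ∑ σ, γ x σ ν * v x σ := by
      rw [Finset.mul_sum, ← Finset.sum_add_distrib]
      exact Finset.sum_congr rfl fun σ _ => by rw [hhdef]; ring
    rw [h1, hrel', hγv' ν]; ring
  exact ⟨hτv, hkv, hhτ, hhγ,
    fun μ ν => by rw [hkdef]; ring,
    fun μ ν => by rw [hhdef]; ring⟩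
end

section
/- (Form of the next-to-leading orders in the Galilean limit ansatz.) Assume at every point of U: τ_μ ≠ 0 (as a covector), h^{μν} is symmetric with h^{μν} τ_ν = 0 and radical exactly the span of τ (i.e., if h^{μν} ξ_ν = 0 for all μ then ξ is a scalar multiple of τ). Let g₀_{μν} and g₂^{μν} be smooth symmetric tensors on U satisfying h^{μα} g₀_{αν} − g₂^{μα} τ_α τ_ν = δ^μ_ν at every point. Define v^μ := − g₂^{μν} τ_ν, k^{μν} := g₂^{μν} + v^μ v^ν, φ := −(1/2) v^μ g₀_{μν} v^ν, and γ_{μν} := g₀_{μν} + 2φ τ_μ τ_ν. Then at every point of U: τ_μ v^μ = 1; k^{μν} τ_ν = 0; γ_{μν} v^ν = 0; and h^{μσ} γ_{σν} = δ^μ_ν − v^μ τ_ν. In particular g₂^{μν} = − v^μ v^ν + k^{μν} and g₀_{μν} = γ_{μν} − 2φ τ_μ τ_ν. -/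
/-- Form of the next-to-leading orders in the Galilean limit ansatz: from the order-λ⁰
coefficient `h^{μα} g₀_{αν} − g₂^{μα} τ_α τ_ν = δ^μ_ν` of `g^{μα}(λ) g_{αν}(λ) = δ^μ_ν`,
defining `v^μ := −g₂^{μν} τ_ν`, `k^{μν} := g₂^{μν} + v^μ v^ν`, `φ := −(1/2) v^μ g₀_{μν} v^ν`,
`γ_{μν} := g₀_{μν} + 2φ τ_μ τ_ν`, one gets `τ_μ v^μ = 1`, `k^{μν} τ_ν = 0`, `γ_{μν} v^ν = 0`,
`h^{μσ} γ_{σν} = δ^μ_ν − v^μ τ_ν`; in particular `g₂ = −v⊗v + k`, `g₀ = γ − 2φ τ⊗τ`. -/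
theorem galilean_limit_nlo_form
    (U : Set Vec4) (hU : IsOpen U) (hne : U.Nonempty)
    (τ : Tens1) (h g₀ g₂ : Tens2)
    (hτs : Smooth1 τ U) (hhs : Smooth2 h U) (hg₀s : Smooth2 g₀ U) (hg₂s : Smooth2 g₂ U)
    (hτne : ∀ x ∈ U, τ x ≠ 0)
    (hhsym : ∀ x ∈ U, ∀ μ ν, h x μ ν = h x ν μ)
    (hhτ : ∀ x ∈ U, ∀ μ, ∑ ν, h x μ ν * τ x ν = 0)
    (hhrad : ∀ x ∈ U, ∀ ξ : Fin 4 → ℝ, (∀ μ, ∑ ν, h x μ ν * ξ ν = 0) → ∃ c : ℝ, ξ = c • τ x)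
    (hg₀sym : ∀ x ∈ U, ∀ μ ν, g₀ x μ ν = g₀ x ν μ)
    (hg₂sym : ∀ x ∈ U, ∀ μ ν, g₂ x μ ν = g₂ x ν μ)
    (hrel : ∀ x ∈ U, ∀ μ ν,
      (∑ α, h x μ α * g₀ x α ν) - (∑ α, g₂ x μ α * τ x α) * τ x ν = kron μ ν)
    (v : Tens1) (k : Tens2) (φ : Vec4 → ℝ) (γ : Tens2)
    (hvdef : ∀ x μ, v x μ = -∑ ν, g₂ x μ ν * τ x ν)
    (hkdef : ∀ x μ ν, k x μ ν = g₂ x μ ν + v x μ * v x ν)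
    (hφdef : ∀ x, φ x = -(1/2) * ∑ μ, ∑ ν, v x μ * g₀ x μ ν * v x ν)
    (hγdef : ∀ x μ ν, γ x μ ν = g₀ x μ ν + 2 * φ x * τ x μ * τ x ν) :
    ∀ x ∈ U,
      (∑ μ, τ x μ * v x μ = 1) ∧
      (∀ μ, ∑ ν, k x μ ν * τ x ν = 0) ∧
      (∀ μ, ∑ ν, γ x μ ν * v x ν = 0) ∧
      (∀ μ ν, ∑ σ, h x μ σ * γ x σ ν = kron μ ν - v x μ * τ x ν) ∧
      (∀ μ ν, g₂ x μ ν = -(v x μ * v x ν) + k x μ ν) ∧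
      (∀ μ ν, g₀ x μ ν = γ x μ ν - 2 * φ x * τ x μ * τ x ν) := by
  intro x hx
  have hsym := hhsym x hx
  have hτ0 := hhτ x hx
  have hrelx := hrel x hx
  -- τ contracted with h on the other slot
  have hτh : ∀ α, ∑ μ, τ x μ * h x μ α = 0 := by
    intro α
    have : ∑ μ, τ x μ * h x μ α = ∑ μ, h x α μ * τ x μ := by
      refine Finset.sum_congr rfl fun μ _ => ?_
      rw [hsym μ α]; ring
    rw [this, hτ0 α]
  -- h · g₀ = kron + A ⊗ τ, where A = -v
  have hAv : ∀ μ, (∑ α, g₂ x μ α * τ x α) = -v x μ := by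
    intro μ; rw [hvdef]; ring
  have hhg₀ : ∀ μ ν, ∑ α, h x μ α * g₀ x α ν = kron μ ν - v x μ * τ x ν := by
    intro μ ν
    have := hrelx μ ν
    rw [hAv] at this
    linarith
  -- Step 1: τ·v = 1
  have hτv : ∑ μ, τ x μ * v x μ = 1 := by
    obtain ⟨ν, hν⟩ := Function.ne_iff.mp (hτne x hx)
    have key : (∑ μ, τ x μ * v x μ) * τ x ν = τ x ν := by
      have h1 : ∑ μ, τ x μ * ((∑ α, h x μ α * g₀ x α ν) - (∑ α, g₂ x μ α * τ x α) * τ x ν)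
          = ∑ μ, τ x μ * kron μ ν :=
        Finset.sum_congr rfl fun μ _ => by rw [hrelx μ ν]
      have h2 : ∑ μ, τ x μ * kron μ ν = τ x ν := by
        simp [kron, mul_ite]
      have h3 : ∑ μ, τ x μ * ∑ α, h x μ α * g₀ x α ν = 0 := by
        calc ∑ μ, τ x μ * ∑ α, h x μ α * g₀ x α ν
            = ∑ μ, ∑ α, τ x μ * h x μ α * g₀ x α ν := by
              simp [Finset.mul_sum, mul_assoc]
          _ = ∑ α, ∑ μ, τ x μ * h x μ α * g₀ x α ν := Finset.sum_comm
          _ = ∑ α, (∑ μ, τ x μ * h x μ α) * g₀ x α ν := by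
              simp [Finset.sum_mul]
          _ = 0 := by simp [hτh]
      have h4 : ∑ μ, τ x μ * ((∑ α, h x μ α * g₀ x α ν) - (∑ α, g₂ x μ α * τ x α) * τ x ν)
          = (∑ μ, τ x μ * ∑ α, h x μ α * g₀ x α ν)
            - (∑ μ, τ x μ * (-v x μ)) * τ x ν := by
        rw [Finset.sum_mul, ← Finset.sum_sub_distrib]
        refine Finset.sum_congr rfl fun μ _ => ?_
        rw [hAv]; ring
      rw [h4, h3, h2] at h1
      have h5 : ∑ μ, τ x μ * -v x μ = -∑ μ, τ x μ * v x μ := by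
        rw [← Finset.sum_neg_distrib]
        exact Finset.sum_congr rfl fun μ _ => by ring
      rw [h5] at h1
      nlinarith [h1]
    have hν' : τ x ν ≠ 0 := hν
    exact mul_right_cancel₀ hν' (by rw [key, one_mul])
  -- Step 2: k τ = 0
  have hkτ : ∀ μ, ∑ ν, k x μ ν * τ x ν = 0 := by
    intro μ
    have : ∑ ν, k x μ ν * τ x ν
        = (∑ ν, g₂ x μ ν * τ x ν) + v x μ * ∑ ν, τ x ν * v x ν := by
      rw [Finset.mul_sum, ← Finset.sum_add_distrib]
      refine Finset.sum_congr rfl fun ν _ => ?_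
      rw [hkdef]; ring
    rw [this, hAv, hτv]; ring
  -- Step 4: h γ = kron - v τ
  have hhγ : ∀ μ ν, ∑ σ, h x μ σ * γ x σ ν = kron μ ν - v x μ * τ x ν := by
    intro μ ν
    have : ∑ σ, h x μ σ * γ x σ ν
        = (∑ σ, h x μ σ * g₀ x σ ν) + 2 * φ x * τ x ν * ∑ σ, h x μ σ * τ x σ := by
      rw [Finset.mul_sum, ← Finset.sum_add_distrib]
      refine Finset.sum_congr rfl fun σ _ => ?_
      rw [hγdef]; ring
    rw [this, hhg₀, hτ0]; ring
  -- Step 3: γ v = 0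
  have hγv : ∀ μ, ∑ ν, γ x μ ν * v x ν = 0 := by
    -- w μ = ∑ g₀ x μ α * v x α  lies in the radical of h
    set w : Fin 4 → ℝ := fun μ => ∑ α, g₀ x μ α * v x α with hw
    have hwrad : ∀ μ, ∑ ν, h x μ ν * w ν = 0 := by
      intro μ
      calc ∑ ν, h x μ ν * w ν
          = ∑ ν, ∑ α, h x μ ν * g₀ x ν α * v x α := by
            refine Finset.sum_congr rfl fun ν _ => ?_
            rw [hw, Finset.mul_sum]
            exact Finset.sum_congr rfl fun α _ => by ring
        _ = ∑ α, (∑ ν, h x μ ν * g₀ x ν α) * v x α := by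
            rw [Finset.sum_comm]
            exact Finset.sum_congr rfl fun α _ => by rw [Finset.sum_mul]
        _ = ∑ α, (kron μ α - v x μ * τ x α) * v x α := by
            exact Finset.sum_congr rfl fun α _ => by rw [hhg₀]
        _ = (∑ α, kron μ α * v x α) - v x μ * ∑ α, τ x α * v x α := by
            rw [Finset.mul_sum, ← Finset.sum_sub_distrib]
            exact Finset.sum_congr rfl fun α _ => by ring
        _ = 0 := by
            rw [hτv]
            simp [kron, ite_mul]
    obtain ⟨c, hc⟩ := hhrad x hx w hwrad
    -- identify c = -2φ
    have hvw : ∑ μ, v x μ * w μ = -2 * φ x := by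
      have : ∑ μ, v x μ * w μ = ∑ μ, ∑ ν, v x μ * g₀ x μ ν * v x ν := by
        refine Finset.sum_congr rfl fun μ _ => ?_
        rw [hw, Finset.mul_sum]
        exact Finset.sum_congr rfl fun ν _ => by ring
      rw [this]
      have := hφdef x
      linarith
    have hvw' : ∑ μ, v x μ * w μ = c := by
      rw [hc]
      have : ∑ μ, v x μ * (c • τ x) μ = c * ∑ μ, τ x μ * v x μ := by
        rw [Finset.mul_sum]
        exact Finset.sum_congr rfl fun μ _ => by simp only [Pi.smul_apply, smul_eq_mul]; ring
      rw [this, hτv, mul_one]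
    have hcval : c = -2 * φ x := by rw [← hvw', hvw]
    intro μ
    have hwμ : w μ = -2 * φ x * τ x μ := by
      rw [hc]; simp only [Pi.smul_apply, smul_eq_mul, hcval]
    have : ∑ ν, γ x μ ν * v x ν
        = w μ + 2 * φ x * τ x μ * ∑ ν, τ x ν * v x ν := by
      rw [hw, Finset.mul_sum, ← Finset.sum_add_distrib]
      refine Finset.sum_congr rfl fun ν _ => ?_
      rw [hγdef]; ring
    rw [this, hwμ, hτv]; ring
  refine ⟨hτv, hkτ, hγv, hhγ, fun μ ν => by rw [hkdef]; ring,
    fun μ ν => by rw [hγdef]; ring⟩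
end

section
/- (Non-metricities of the zeroth-order connection in the Galilean limit.) Assume the duality relations hold on U, and let φ be a smooth scalar field and k^{μν} a smooth symmetric tensor field with k^{μν} τ_ν = 0 at every point. Define Γ₀^α_{μν} := ^{v,τ}Γ^α_{μν} + (−2φ h^{ασ} + v^α v^σ − k^{ασ})(τ_μ ω_{νσ} + τ_ν ω_{μσ}) + τ_μ τ_ν h^{ασ} ∂_σ φ. Then Γ₀^α_{μν} = Γ₀^α_{νμ} (torsion-free), and the covariant derivatives with respect to Γ₀ satisfy at every point: ∇_μ τ_ν = ω_{μν} − τ_μ ω_{νσ} v^σ − τ_ν ω_{μσ} v^σ, and ∇_α h^{μν} = v^μ h^{νσ} ω_{σα} + v^ν h^{μσ} ω_{σα} + τ_α ( v^μ h^{νλ} ω_{λσ} v^σ + v^ν h^{μλ} ω_{λσ} v^σ − k^{σμ} h^{νλ} ω_{λσ} − k^{σν} h^{μλ} ω_{λσ} ). -/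
/-- The zeroth-order connection in the Galilean limit:
`Γ₀^α_{μν} := ^{v,τ}Γ^α_{μν} + (−2φ h^{ασ} + v^α v^σ − k^{ασ})(τ_μ ω_{νσ} + τ_ν ω_{μσ})
+ τ_μ τ_ν h^{ασ} ∂_σ φ`. -/
noncomputable def galLimitConn (v τ : Tens1) (γ h k : Tens2) (φ : Vec4 → ℝ) : Tens3 :=
  fun x α μ ν =>
    compatConn v τ γ h x α μ ν
    + ∑ σ, (-2 * φ x * h x α σ + v x α * v x σ - k x α σ)
        * (τ x μ * omega2 τ x ν σ + τ x ν * omega2 τ x μ σ)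
    + τ x μ * τ x ν * ∑ σ, h x α σ * pd σ φ x


/-! Auxiliary lemmas about `pd` and finite sums. -/

lemma pd_congr {μ : Fin 4} {f g : Vec4 → ℝ} {x : Vec4}
    (hfg : f =ᶠ[nhds x] g) : pd μ f x = pd μ g x := by
  unfold pd; rw [hfg.fderiv_eq]

lemma pd_eq_of_eqOn {μ : Fin 4} {f g : Vec4 → ℝ} {U : Set Vec4} (hU : IsOpen U)
    {x : Vec4} (hx : x ∈ U) (hfg : ∀ y ∈ U, f y = g y) : pd μ f x = pd μ g x :=
  pd_congr (Filter.eventuallyEq_of_mem (hU.mem_nhds hx) hfg)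

lemma pd_const {μ : Fin 4} {c : ℝ} {x : Vec4} : pd μ (fun _ => c) x = 0 := by
  unfold pd; simp

lemma pd_mul {μ : Fin 4} {f g : Vec4 → ℝ} {x : Vec4}
    (hf : DifferentiableAt ℝ f x) (hg : DifferentiableAt ℝ g x) :
    pd μ (fun y => f y * g y) x = pd μ f x * g x + f x * pd μ g x := by
  unfold pd; rw [fderiv_fun_mul hf hg]; simp; ring

lemma pd_sum {μ : Fin 4} {x : Vec4} {f : Fin 4 → Vec4 → ℝ}
    (hf : ∀ i, DifferentiableAt ℝ (f i) x) :
    pd μ (fun y => ∑ i, f i y) x = ∑ i, pd μ (f i) x := by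
  unfold pd
  rw [fderiv_fun_sum (fun i _ => hf i)]
  simp

lemma pd_sub {μ : Fin 4} {f g : Vec4 → ℝ} {x : Vec4}
    (hf : DifferentiableAt ℝ f x) (hg : DifferentiableAt ℝ g x) :
    pd μ (fun y => f y - g y) x = pd μ f x - pd μ g x := by
  unfold pd; rw [fderiv_fun_sub hf hg]; simp

lemma sumeq {f g : Fin 4 → ℝ} (h : ∀ i, f i = g i) : ∑ i, f i = ∑ i, g i :=
  Finset.sum_congr rfl fun i _ => h i

lemma sum2eq {f g : Fin 4 → Fin 4 → ℝ} (h : ∀ i j, f i j = g i j) :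
    (∑ i, ∑ j, f i j) = ∑ i, ∑ j, g i j := sumeq fun i => sumeq fun j => h i j

lemma sumadd (f g : Fin 4 → ℝ) : (∑ i, (f i + g i)) = (∑ i, f i) + ∑ i, g i :=
  Finset.sum_add_distrib

lemma sumsub (f g : Fin 4 → ℝ) : (∑ i, (f i - g i)) = (∑ i, f i) - ∑ i, g i :=
  Finset.sum_sub_distrib f g

lemma mulsum (c : ℝ) (f : Fin 4 → ℝ) : (∑ i, c * f i) = c * ∑ i, f i :=
  (Finset.mul_sum _ _ _).symm

lemma summul (f : Fin 4 → ℝ) (c : ℝ) : (∑ i, f i * c) = (∑ i, f i) * c :=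
  (Finset.sum_mul _ _ _).symm

lemma mulsum2 (c : ℝ) (f : Fin 4 → Fin 4 → ℝ) :
    (∑ i, ∑ j, c * f i j) = c * ∑ i, ∑ j, f i j := by
  calc (∑ i, ∑ j, c * f i j) = ∑ i, c * ∑ j, f i j := sumeq fun i => mulsum c (f i)
    _ = c * ∑ i, ∑ j, f i j := mulsum c _

lemma sum2add (f g : Fin 4 → Fin 4 → ℝ) :
    (∑ i, ∑ j, (f i j + g i j)) = (∑ i, ∑ j, f i j) + ∑ i, ∑ j, g i j := by
  calc (∑ i, ∑ j, (f i j + g i j)) = ∑ i, ((∑ j, f i j) + ∑ j, g i j) :=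
        sumeq fun i => sumadd _ _
    _ = _ := sumadd _ _

lemma sum2sub (f g : Fin 4 → Fin 4 → ℝ) :
    (∑ i, ∑ j, (f i j - g i j)) = (∑ i, ∑ j, f i j) - ∑ i, ∑ j, g i j := by
  calc (∑ i, ∑ j, (f i j - g i j)) = ∑ i, ((∑ j, f i j) - ∑ j, g i j) :=
        sumeq fun i => sumsub _ _
    _ = _ := sumsub _ _

lemma kronsum (f : Fin 4 → ℝ) (ν : Fin 4) : (∑ σ, f σ * kron ν σ) = f ν := by
  simp [kron, mul_ite]

lemma contract_eq (C : Fin 4 → ℝ) (M : Fin 4 → Fin 4 → ℝ) (T w : Fin 4 → ℝ)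
    (h0 : ∀ ρ, (∑ σ, T σ * M σ ρ) = w ρ) :
    (∑ σ, (∑ ρ, M σ ρ * C ρ) * T σ) = ∑ ρ, w ρ * C ρ := by
  calc (∑ σ, (∑ ρ, M σ ρ * C ρ) * T σ)
      = ∑ σ, ∑ ρ, T σ * M σ ρ * C ρ := by
        refine sumeq fun σ => ?_
        rw [Finset.sum_mul]; exact sumeq fun ρ => by ring
    _ = ∑ ρ, ∑ σ, T σ * M σ ρ * C ρ := Finset.sum_comm
    _ = ∑ ρ, (∑ σ, T σ * M σ ρ) * C ρ := sumeq fun ρ => (Finset.sum_mul _ _ _).symm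
    _ = ∑ ρ, w ρ * C ρ := sumeq fun ρ => by rw [h0 ρ]

lemma contract_zero (C : Fin 4 → ℝ) (M : Fin 4 → Fin 4 → ℝ) (T : Fin 4 → ℝ)
    (h0 : ∀ ρ, (∑ σ, T σ * M σ ρ) = 0) :
    (∑ σ, (∑ ρ, M σ ρ * C ρ) * T σ) = 0 := by
  rw [contract_eq C M T (fun _ => 0) h0]; simp

/-- Non-metricities of the zeroth-order connection in the Galilean limit: `Γ₀` is
torsion-free, `∇_μ τ_ν = ω_{μν} − τ_μ ω_{νσ} v^σ − τ_ν ω_{μσ} v^σ`, and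
`∇_α h^{μν} = v^μ h^{νσ} ω_{σα} + v^ν h^{μσ} ω_{σα}
+ τ_α (v^μ h^{νλ} ω_{λσ} v^σ + v^ν h^{μλ} ω_{λσ} v^σ − k^{σμ} h^{νλ} ω_{λσ} − k^{σν} h^{μλ} ω_{λσ})`. -/
theorem galilean_limit_zeroth_order_nonmetricity
    (U : Set Vec4) (hU : IsOpen U) (hne : U.Nonempty)
    (τ v : Tens1) (γ h k : Tens2) (φ : Vec4 → ℝ)
    (hτs : Smooth1 τ U) (hvs : Smooth1 v U) (hγs : Smooth2 γ U) (hhs : Smooth2 h U)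
    (hks : Smooth2 k U) (hφs : ContDiffOn ℝ (⊤ : ℕ∞) φ U)
    (hdual : DualityOn τ v γ h U)
    (hksym : ∀ x ∈ U, ∀ μ ν, k x μ ν = k x ν μ)
    (hkτ : ∀ x ∈ U, ∀ μ, ∑ ν, k x μ ν * τ x ν = 0) :
    ∀ x ∈ U,
      (∀ α μ ν, galLimitConn v τ γ h k φ x α μ ν = galLimitConn v τ γ h k φ x α ν μ) ∧
      (∀ μ ν, covOne (galLimitConn v τ γ h k φ) τ x μ ν
        = omega2 τ x μ ν - τ x μ * (∑ σ, omega2 τ x ν σ * v x σ)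
          - τ x ν * (∑ σ, omega2 τ x μ σ * v x σ)) ∧
      (∀ α μ ν, covUp (galLimitConn v τ γ h k φ) h x α μ ν
        = (∑ σ, v x μ * h x ν σ * omega2 τ x σ α)
          + (∑ σ, v x ν * h x μ σ * omega2 τ x σ α)
          + τ x α * ((∑ l, ∑ σ, v x μ * h x ν l * omega2 τ x l σ * v x σ)
            + (∑ l, ∑ σ, v x ν * h x μ l * omega2 τ x l σ * v x σ)
            - (∑ σ, ∑ l, k x σ μ * h x ν l * omega2 τ x l σ)
            - (∑ σ, ∑ l, k x σ ν * h x μ l * omega2 τ x l σ))) := by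

  intro x hx
  obtain ⟨hγsym, hhsym, hτv, hhτ, hγv, hhγ⟩ := hdual x hx
  have hUx := hU.mem_nhds hx
  have dA : ∀ f : Vec4 → ℝ, ContDiffOn ℝ (⊤ : ℕ∞) f U → DifferentiableAt ℝ f x :=
    fun f hf => (hf.contDiffAt hUx).differentiableAt (by simp)
  have dτ : ∀ ν, DifferentiableAt ℝ (fun y => τ y ν) x := fun ν => dA _ (hτs ν)
  have dv : ∀ ν, DifferentiableAt ℝ (fun y => v y ν) x := fun ν => dA _ (hvs ν)
  have dγ : ∀ μ ν, DifferentiableAt ℝ (fun y => γ y μ ν) x := fun μ ν => dA _ (hγs μ ν)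
  have dh : ∀ μ ν, DifferentiableAt ℝ (fun y => h y μ ν) x := fun μ ν => dA _ (hhs μ ν)
  have Dsym : ∀ σ μ ν : Fin 4, pd σ (fun y => γ y μ ν) x = pd σ (fun y => γ y ν μ) x :=
    fun σ μ ν => pd_eq_of_eqOn hU hx fun y hy => (hdual y hy).1 μ ν
  have hTH : ∀ ρ, (∑ σ, τ x σ * h x σ ρ) = 0 := by
    intro ρ; rw [← hhτ ρ]
    exact sumeq fun σ => by rw [hhsym ρ σ]; ring
  have hTK : ∀ ρ, (∑ σ, τ x σ * k x σ ρ) = 0 := by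
    intro ρ; rw [← hkτ x hx ρ]
    exact sumeq fun σ => by rw [hksym x hx ρ σ]; ring
  have hGH : ∀ σ ν, (∑ ρ, γ x σ ρ * h x ρ ν) = kron ν σ - v x ν * τ x σ := by
    intro σ ν; rw [← hhγ ν σ]
    exact sumeq fun ρ => by rw [hγsym σ ρ, hhsym ρ ν]; ring
  have D1 : ∀ α ν : Fin 4,
      (∑ σ, (pd α (fun y => h y ν σ) x * τ x σ + h x ν σ * pd α (fun y => τ y σ) x)) = 0 := by
    intro α ν
    have e1 : pd α (fun y => ∑ σ, h y ν σ * τ y σ) x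
        = ∑ σ, (pd α (fun y => h y ν σ) x * τ x σ + h x ν σ * pd α (fun y => τ y σ) x) := by
      rw [pd_sum fun σ => (dh ν σ).fun_mul (dτ σ)]
      exact sumeq fun σ => pd_mul (dh ν σ) (dτ σ)
    rw [← e1,
      pd_eq_of_eqOn (g := fun _ => (0 : ℝ)) hU hx fun y hy => (hdual y hy).2.2.2.1 ν,
      pd_const]
  have D4 : ∀ α μ ρ : Fin 4,
      (∑ σ, (pd α (fun y => h y μ σ) x * γ x σ ρ + h x μ σ * pd α (fun y => γ y σ ρ) x))
        = -(pd α (fun y => v y μ) x * τ x ρ) - v x μ * pd α (fun y => τ y ρ) x := by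
    intro α μ ρ
    have e1 : pd α (fun y => ∑ σ, h y μ σ * γ y σ ρ) x
        = ∑ σ, (pd α (fun y => h y μ σ) x * γ x σ ρ + h x μ σ * pd α (fun y => γ y σ ρ) x) := by
      rw [pd_sum fun σ => (dh μ σ).fun_mul (dγ σ ρ)]
      exact sumeq fun σ => pd_mul (dh μ σ) (dγ σ ρ)
    have e2 : pd α (fun y => kron μ ρ - v y μ * τ y ρ) x
        = -(pd α (fun y => v y μ) x * τ x ρ) - v x μ * pd α (fun y => τ y ρ) x := by
      rw [pd_sub (differentiableAt_const _) ((dv μ).fun_mul (dτ ρ)), pd_const,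
        pd_mul (dv μ) (dτ ρ)]
      ring
    rw [← e1, pd_eq_of_eqOn hU hx fun y hy => (hdual y hy).2.2.2.2.2 μ ρ, e2]
  have ωa : ∀ a b : Fin 4, omega2 τ x a b = -omega2 τ x b a := fun a b => by
    unfold omega2; ring
  have hTQ : ∀ ρ, (∑ σ, τ x σ * (-2 * φ x * h x σ ρ + v x σ * v x ρ - k x σ ρ)) = v x ρ := by
    intro ρ
    have e : (∑ σ, τ x σ * (-2 * φ x * h x σ ρ + v x σ * v x ρ - k x σ ρ))
        = ((-2 * φ x) * ∑ σ, τ x σ * h x σ ρ)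
          + ((∑ σ, τ x σ * v x σ) * v x ρ - ∑ σ, τ x σ * k x σ ρ) := by
      rw [← mulsum (-2 * φ x) (fun σ => τ x σ * h x σ ρ),
        ← summul (fun σ => τ x σ * v x σ) (v x ρ), ← sumsub, ← sumadd]
      exact sumeq fun σ => by ring
    rw [e, hTH, hTK, hτv]; ring
  refine ⟨fun α μ ν => ?_, fun μ ν => ?_, fun α μ ν => ?_⟩
  · -- torsion-free
    simp only [galLimitConn, compatConn]
    have eA : (∑ σ, h x α σ * ((1/2) * pd μ (fun y => γ y ν σ) x
          + (1/2) * pd ν (fun y => γ y μ σ) x - (1/2) * pd σ (fun y => γ y μ ν) x))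
        = ∑ σ, h x α σ * ((1/2) * pd ν (fun y => γ y μ σ) x
          + (1/2) * pd μ (fun y => γ y ν σ) x - (1/2) * pd σ (fun y => γ y ν μ) x) :=
      sumeq fun σ => by rw [Dsym σ μ ν]; ring
    have eB : (∑ σ, (-2 * φ x * h x α σ + v x α * v x σ - k x α σ)
          * (τ x μ * omega2 τ x ν σ + τ x ν * omega2 τ x μ σ))
        = ∑ σ, (-2 * φ x * h x α σ + v x α * v x σ - k x α σ)
          * (τ x ν * omega2 τ x μ σ + τ x μ * omega2 τ x ν σ) :=
      sumeq fun σ => by ring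
    rw [eA, eB]; ring
  · -- covariant derivative of τ
    unfold covOne
    have hsplitb : (∑ σ, galLimitConn v τ γ h k φ x σ μ ν * τ x σ)
        = (∑ σ, (∑ ρ, h x σ ρ * ((1/2) * pd μ (fun y => γ y ν ρ) x
            + (1/2) * pd ν (fun y => γ y μ ρ) x - (1/2) * pd ρ (fun y => γ y μ ν) x)) * τ x σ)
          + ((∑ σ, τ x σ * v x σ)
              * ((1/2) * (pd μ (fun y => τ y ν) x + pd ν (fun y => τ y μ) x))
          + ((∑ σ, (∑ ρ, (-2 * φ x * h x σ ρ + v x σ * v x ρ - k x σ ρ)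
              * (τ x μ * omega2 τ x ν ρ + τ x ν * omega2 τ x μ ρ)) * τ x σ)
          + (∑ σ, (∑ ρ, h x σ ρ * pd ρ φ x) * τ x σ) * (τ x μ * τ x ν))) := by
      rw [← summul (fun σ => τ x σ * v x σ)
            ((1/2) * (pd μ (fun y => τ y ν) x + pd ν (fun y => τ y μ) x)),
          ← summul (fun σ => (∑ ρ, h x σ ρ * pd ρ φ x) * τ x σ) (τ x μ * τ x ν),
          ← sumadd, ← sumadd, ← sumadd]
      refine sumeq fun σ => ?_
      simp only [galLimitConn, compatConn, Fin.sum_univ_four]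
      ring
    rw [hsplitb, contract_zero _ _ _ hTH, hτv, contract_eq _ _ _ _ hTQ,
      contract_zero _ _ _ hTH]
    have e3' : (∑ ρ, v x ρ * (τ x μ * omega2 τ x ν ρ + τ x ν * omega2 τ x μ ρ))
        = τ x μ * (∑ σ, omega2 τ x ν σ * v x σ) + τ x ν * (∑ σ, omega2 τ x μ σ * v x σ) := by
      rw [← mulsum (τ x μ) (fun σ => omega2 τ x ν σ * v x σ),
        ← mulsum (τ x ν) (fun σ => omega2 τ x μ σ * v x σ), ← sumadd]
      exact sumeq fun ρ => by ring
    rw [e3']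
    simp only [omega2]; ring
  · -- covariant derivative of h
    have hsplit : ∀ m n : Fin 4, (∑ σ, galLimitConn v τ γ h k φ x m α σ * h x σ n)
        = (∑ σ, ∑ ρ, h x m ρ * h x σ n * ((1/2) * pd α (fun y => γ y σ ρ) x
            + (1/2) * pd σ (fun y => γ y α ρ) x - (1/2) * pd ρ (fun y => γ y α σ) x))
          + (((1/2) * v x m)
              * (∑ σ, (pd α (fun y => τ y σ) x + pd σ (fun y => τ y α) x) * h x σ n)
          + (τ x α * (∑ σ, ∑ ρ, (-2 * φ x * h x m ρ + v x m * v x ρ - k x m ρ)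
              * h x σ n * omega2 τ x σ ρ)
          + ((∑ σ, τ x σ * h x σ n)
              * (∑ ρ, (-2 * φ x * h x m ρ + v x m * v x ρ - k x m ρ) * omega2 τ x α ρ)
          + (∑ σ, τ x σ * h x σ n) * (τ x α * (∑ ρ, h x m ρ * pd ρ φ x))))) := by
      intro m n
      rw [← mulsum ((1/2) * v x m)
            (fun σ => (pd α (fun y => τ y σ) x + pd σ (fun y => τ y α) x) * h x σ n),
          ← mulsum (τ x α)
            (fun σ => ∑ ρ, (-2 * φ x * h x m ρ + v x m * v x ρ - k x m ρ)
              * h x σ n * omega2 τ x σ ρ),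
          ← summul (fun σ => τ x σ * h x σ n)
            (∑ ρ, (-2 * φ x * h x m ρ + v x m * v x ρ - k x m ρ) * omega2 τ x α ρ),
          ← summul (fun σ => τ x σ * h x σ n) (τ x α * (∑ ρ, h x m ρ * pd ρ φ x)),
          ← sumadd, ← sumadd, ← sumadd, ← sumadd]
      refine sumeq fun σ => ?_
      simp only [galLimitConn, compatConn, Fin.sum_univ_four]
      ring
    have Wsum : (∑ σ, ∑ ρ, h x μ ρ * h x σ ν * ((1/2) * pd α (fun y => γ y σ ρ) x
            + (1/2) * pd σ (fun y => γ y α ρ) x - (1/2) * pd ρ (fun y => γ y α σ) x))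
          + (∑ σ, ∑ ρ, h x ν ρ * h x σ μ * ((1/2) * pd α (fun y => γ y σ ρ) x
            + (1/2) * pd σ (fun y => γ y α ρ) x - (1/2) * pd ρ (fun y => γ y α σ) x))
        = ∑ σ, ∑ ρ, h x μ ρ * h x σ ν * pd α (fun y => γ y σ ρ) x := by
      have e : (∑ σ, ∑ ρ, h x ν ρ * h x σ μ * ((1/2) * pd α (fun y => γ y σ ρ) x
            + (1/2) * pd σ (fun y => γ y α ρ) x - (1/2) * pd ρ (fun y => γ y α σ) x))
          = ∑ σ, ∑ ρ, h x ν σ * h x ρ μ * ((1/2) * pd α (fun y => γ y ρ σ) x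
            + (1/2) * pd ρ (fun y => γ y α σ) x - (1/2) * pd σ (fun y => γ y α ρ) x) :=
        Finset.sum_comm
      rw [e, ← sumadd]
      refine sumeq fun σ => ?_
      rw [← sumadd]
      refine sumeq fun ρ => ?_
      rw [hhsym ν σ, hhsym ρ μ, Dsym α ρ σ]; ring
    have contr : (∑ ρ, (∑ σ, (pd α (fun y => h y μ σ) x * γ x σ ρ
            + h x μ σ * pd α (fun y => γ y σ ρ) x)) * h x ρ ν)
        = ∑ ρ, (-(pd α (fun y => v y μ) x * τ x ρ)
            - v x μ * pd α (fun y => τ y ρ) x) * h x ρ ν :=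
      sumeq fun ρ => by rw [D4 α μ ρ]
    have L1 : (∑ ρ, (∑ σ, (pd α (fun y => h y μ σ) x * γ x σ ρ
            + h x μ σ * pd α (fun y => γ y σ ρ) x)) * h x ρ ν)
        = (pd α (fun y => h y μ ν) x
            - v x ν * (∑ σ, pd α (fun y => h y μ σ) x * τ x σ))
          + ∑ σ, ∑ ρ, h x μ ρ * h x σ ν * pd α (fun y => γ y σ ρ) x := by
      calc (∑ ρ, (∑ σ, (pd α (fun y => h y μ σ) x * γ x σ ρ
              + h x μ σ * pd α (fun y => γ y σ ρ) x)) * h x ρ ν)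
          = (∑ ρ, ∑ σ, pd α (fun y => h y μ σ) x * γ x σ ρ * h x ρ ν)
            + (∑ ρ, ∑ σ, h x μ σ * pd α (fun y => γ y σ ρ) x * h x ρ ν) := by
            rw [← sumadd]
            refine sumeq fun ρ => ?_
            rw [Finset.sum_mul, ← sumadd]
            exact sumeq fun σ => by ring
        _ = (∑ σ, ∑ ρ, pd α (fun y => h y μ σ) x * γ x σ ρ * h x ρ ν)
            + (∑ ρ, ∑ σ, h x μ σ * pd α (fun y => γ y σ ρ) x * h x ρ ν) := by
            rw [show (∑ ρ, ∑ σ, pd α (fun y => h y μ σ) x * γ x σ ρ * h x ρ ν)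
                = ∑ σ, ∑ ρ, pd α (fun y => h y μ σ) x * γ x σ ρ * h x ρ ν
              from Finset.sum_comm]
        _ = (∑ σ, pd α (fun y => h y μ σ) x * (kron ν σ - v x ν * τ x σ))
            + ∑ σ, ∑ ρ, h x μ ρ * h x σ ν * pd α (fun y => γ y σ ρ) x := by
            congr 1
            · refine sumeq fun σ => ?_
              rw [show (∑ ρ, pd α (fun y => h y μ σ) x * γ x σ ρ * h x ρ ν)
                  = pd α (fun y => h y μ σ) x * ∑ ρ, γ x σ ρ * h x ρ ν from by
                rw [Finset.mul_sum]; exact sumeq fun ρ => by ring, hGH σ ν]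
            · exact sum2eq fun a b => by rw [Dsym α b a]; ring
        _ = (pd α (fun y => h y μ ν) x
              - v x ν * (∑ σ, pd α (fun y => h y μ σ) x * τ x σ))
            + ∑ σ, ∑ ρ, h x μ ρ * h x σ ν * pd α (fun y => γ y σ ρ) x := by
            congr 1
            calc (∑ σ, pd α (fun y => h y μ σ) x * (kron ν σ - v x ν * τ x σ))
                = (∑ σ, pd α (fun y => h y μ σ) x * kron ν σ)
                  - v x ν * (∑ σ, pd α (fun y => h y μ σ) x * τ x σ) := by
                  rw [← mulsum (v x ν) (fun σ => pd α (fun y => h y μ σ) x * τ x σ),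
                    ← sumsub]
                  exact sumeq fun σ => by ring
              _ = pd α (fun y => h y μ ν) x
                  - v x ν * (∑ σ, pd α (fun y => h y μ σ) x * τ x σ) := by
                  rw [kronsum]
    have R1' : (∑ ρ, (-(pd α (fun y => v y μ) x * τ x ρ)
            - v x μ * pd α (fun y => τ y ρ) x) * h x ρ ν)
        = v x μ * (∑ σ, pd α (fun y => h y ν σ) x * τ x σ) := by
      have e : (∑ ρ, (-(pd α (fun y => v y μ) x * τ x ρ)
              - v x μ * pd α (fun y => τ y ρ) x) * h x ρ ν)
          = (-(pd α (fun y => v y μ) x)) * (∑ ρ, τ x ρ * h x ρ ν)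
            - v x μ * (∑ ρ, h x ν ρ * pd α (fun y => τ y ρ) x) := by
        rw [← mulsum (-(pd α (fun y => v y μ) x)) (fun ρ => τ x ρ * h x ρ ν),
          ← mulsum (v x μ) (fun ρ => h x ν ρ * pd α (fun y => τ y ρ) x), ← sumsub]
        refine sumeq fun ρ => ?_
        rw [hhsym ν ρ]; ring
      have hD : (∑ ρ, h x ν ρ * pd α (fun y => τ y ρ) x)
          = -(∑ σ, pd α (fun y => h y ν σ) x * τ x σ) := by
        have e2 := D1 α ν
        rw [sumadd] at e2
        linarith
      rw [e, hTH ν, hD]; ring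
    have star : pd α (fun y => h y μ ν) x
          + (∑ σ, ∑ ρ, h x μ ρ * h x σ ν * pd α (fun y => γ y σ ρ) x)
        = v x μ * (∑ σ, pd α (fun y => h y ν σ) x * τ x σ)
          + v x ν * (∑ σ, pd α (fun y => h y μ σ) x * τ x σ) := by
      have e := contr
      rw [L1, R1'] at e
      linarith
    have vred : ∀ m n : Fin 4,
        ((1/2) * v x m)
            * (∑ σ, (pd α (fun y => τ y σ) x + pd σ (fun y => τ y α) x) * h x σ n)
          + v x m * (∑ σ, pd α (fun y => h y n σ) x * τ x σ)
        = ∑ σ, v x m * h x n σ * omega2 τ x σ α := by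
      intro m n
      have e1 : (∑ σ, (pd α (fun y => τ y σ) x + pd σ (fun y => τ y α) x) * h x σ n)
          = (∑ σ, h x n σ * pd α (fun y => τ y σ) x)
            + (∑ σ, h x n σ * pd σ (fun y => τ y α) x) := by
        rw [← sumadd]
        exact sumeq fun σ => by rw [hhsym n σ]; ring
      have e2 : (∑ σ, v x m * h x n σ * omega2 τ x σ α)
          = v x m * ((1/2) * ((∑ σ, h x n σ * pd σ (fun y => τ y α) x)
            - (∑ σ, h x n σ * pd α (fun y => τ y σ) x))) := by
        rw [← sumsub, ← mulsum ((1:ℝ)/2)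
            (fun σ => h x n σ * pd σ (fun y => τ y α) x
              - h x n σ * pd α (fun y => τ y σ) x),
          ← mulsum (v x m) _]
        refine sumeq fun σ => ?_
        simp only [omega2]; ring
      have e3 : (∑ σ, pd α (fun y => h y n σ) x * τ x σ)
          = -(∑ σ, h x n σ * pd α (fun y => τ y σ) x) := by
        have e4 := D1 α n
        rw [sumadd] at e4
        linarith
      rw [e1, e2, e3]; ring
    have f1 : (∑ σ, ∑ ρ, h x μ ρ * h x σ ν * omega2 τ x σ ρ)
          + (∑ σ, ∑ ρ, h x ν ρ * h x σ μ * omega2 τ x σ ρ) = 0 := by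
      have e : (∑ σ, ∑ ρ, h x ν ρ * h x σ μ * omega2 τ x σ ρ)
          = ∑ σ, ∑ ρ, -(h x μ ρ * h x σ ν * omega2 τ x σ ρ) := by
        calc (∑ σ, ∑ ρ, h x ν ρ * h x σ μ * omega2 τ x σ ρ)
            = ∑ σ, ∑ ρ, h x ν σ * h x ρ μ * omega2 τ x ρ σ := Finset.sum_comm
          _ = _ := sum2eq fun a b => by rw [hhsym ν a, hhsym b μ, ωa b a]; ring
      have e' : (∑ σ, ∑ ρ, -(h x μ ρ * h x σ ν * omega2 τ x σ ρ))
          = -(∑ σ, ∑ ρ, h x μ ρ * h x σ ν * omega2 τ x σ ρ) := by simp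
      rw [e, e']; ring
    have f2 : ∀ m n : Fin 4,
        (∑ σ, ∑ ρ, v x m * v x ρ * h x σ n * omega2 τ x σ ρ)
        = ∑ l, ∑ σ, v x m * h x n l * omega2 τ x l σ * v x σ :=
      fun m n => sum2eq fun a b => by rw [hhsym a n]; ring
    have f3 : ∀ m n : Fin 4,
        (∑ σ, ∑ ρ, k x m ρ * h x σ n * omega2 τ x σ ρ)
        = ∑ σ, ∑ l, k x σ m * h x n l * omega2 τ x l σ := by
      intro m n
      calc (∑ σ, ∑ ρ, k x m ρ * h x σ n * omega2 τ x σ ρ)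
          = ∑ σ, ∑ ρ, k x m σ * h x ρ n * omega2 τ x ρ σ := Finset.sum_comm
        _ = ∑ σ, ∑ l, k x σ m * h x n l * omega2 τ x l σ :=
          sum2eq fun a b => by rw [hksym x hx m a, hhsym b n]
    have Qdec : ∀ m n : Fin 4,
        (∑ σ, ∑ ρ, (-2 * φ x * h x m ρ + v x m * v x ρ - k x m ρ)
            * h x σ n * omega2 τ x σ ρ)
        = (-2 * φ x) * (∑ σ, ∑ ρ, h x m ρ * h x σ n * omega2 τ x σ ρ)
          + ((∑ σ, ∑ ρ, v x m * v x ρ * h x σ n * omega2 τ x σ ρ)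
          - (∑ σ, ∑ ρ, k x m ρ * h x σ n * omega2 τ x σ ρ)) := by
      intro m n
      calc (∑ σ, ∑ ρ, (-2 * φ x * h x m ρ + v x m * v x ρ - k x m ρ)
              * h x σ n * omega2 τ x σ ρ)
          = ∑ σ, ∑ ρ, ((-2 * φ x) * (h x m ρ * h x σ n * omega2 τ x σ ρ)
              + (v x m * v x ρ * h x σ n * omega2 τ x σ ρ
                - k x m ρ * h x σ n * omega2 τ x σ ρ)) :=
            sum2eq fun a b => by ring
        _ = _ := by rw [sum2add, sum2sub, mulsum2]
    unfold covUp
    rw [show (∑ σ, galLimitConn v τ γ h k φ x ν α σ * h x μ σ)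
          = ∑ σ, galLimitConn v τ γ h k φ x ν α σ * h x σ μ from
        sumeq fun σ => by rw [hhsym μ σ]]
    rw [hsplit μ ν, hsplit ν μ, hTH μ, hTH ν]
    linear_combination star + vred μ ν + vred ν μ + Wsum
      + τ x α * Qdec μ ν + τ x α * Qdec ν μ + (τ x α * (-2 * φ x)) * f1
      + τ x α * f2 μ ν + τ x α * f2 ν μ - τ x α * f3 μ ν - τ x α * f3 ν μ
end
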